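/- arXiv:2412.09300 — 15 statements merged into one kernel-verified Lean document; each statement's English description precedes it below -/
import Mathlib

section
/- Let P be a 2-torsion free ring and let d : P → P be a commuting Jordan derivation. Then for all p₁, p₂ ∈ P, d(p₁p₂p₁) = 3·d(p₁)p₂p₁ + d(p₂)p₁² − d(p₁)p₁p₂. -/
/-!
Linearizing `d (p ^ 2) = d p * p + p * d p` at `x` and `x * y + y * x` gives Herstein's identity
`d (x * y * x) = d x * y * x + x * d y * x + x * y * d x` up to a factor `2`, which 2-torsion
freeness cancels. Linearizing `d p * p = p * d p` then moves `d x` and `d y` to the left: it shows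
that `d x` anticommutes with the commutator `x * y - y * x`, which turns the two terms
`x * d y * x + x * y * d x` into `2 • (d x * y * x) + d y * x ^ 2 - d x * x * y`.
-/

namespace CommutingJordanDerivation

variable {P : Type*} [Ring P] (d : P →+ P)

theorem map_mul_add_mul_comm (hJ : ∀ p : P, d (p ^ 2) = d p * p + p * d p) (x y : P) :
    d (x * y + y * x) = d x * y + x * d y + d y * x + y * d x := by
  have h := hJ (x + y)
  rw [show (x + y) ^ 2 = x ^ 2 + y ^ 2 + (x * y + y * x) by noncomm_ring,
    map_add d (x ^ 2 + y ^ 2), map_add d (x ^ 2), map_add d x y, hJ, hJ] at h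
  linear_combination (norm := noncomm_ring) h

theorem apply_mul_add_apply_mul_comm (hC : ∀ p : P, d p * p = p * d p) (x y : P) :
    d x * y + d y * x = x * d y + y * d x := by
  have h := hC (x + y)
  rw [map_add] at h
  linear_combination (norm := noncomm_ring) h - hC x - hC y

theorem two_nsmul_map_mul_mul_self (hJ : ∀ p : P, d (p ^ 2) = d p * p + p * d p) (x y : P) :
    2 • d (x * y * x) = 2 • (d x * y * x + x * d y * x + x * y * d x) := by
  have h := map_mul_add_mul_comm d hJ x (x * y + y * x)
  rw [show x * (x * y + y * x) + (x * y + y * x) * x = x ^ 2 * y + y * x ^ 2 + 2 • (x * y * x) by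
      noncomm_ring, map_add, map_nsmul, map_mul_add_mul_comm d hJ (x ^ 2) y,
    map_mul_add_mul_comm d hJ x y, hJ] at h
  linear_combination (norm := noncomm_ring) h

theorem map_mul_mul_self (htf : ∀ p : P, 2 • p = 0 → p = 0)
    (hJ : ∀ p : P, d (p ^ 2) = d p * p + p * d p) (x y : P) :
    d (x * y * x) = d x * y * x + x * d y * x + x * y * d x := by
  rw [← sub_eq_zero]
  apply htf
  rw [nsmul_sub, two_nsmul_map_mul_mul_self d hJ, sub_self]

theorem apply_anticomm_commutator (hJ : ∀ p : P, d (p ^ 2) = d p * p + p * d p)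
    (hC : ∀ p : P, d p * p = p * d p) (x y : P) :
    d x * (x * y - y * x) = (y * x - x * y) * d x := by
  have h := apply_mul_add_apply_mul_comm d hC (x ^ 2) y
  rw [hJ] at h
  linear_combination (norm := noncomm_ring) h
    - x * apply_mul_add_apply_mul_comm d hC x y - apply_mul_add_apply_mul_comm d hC x y * x

end CommutingJordanDerivation

open CommutingJordanDerivation in
/-- Let P be a 2-torsion free ring and d a commuting Jordan derivation. Then
d(p₁p₂p₁) = 3·d(p₁)p₂p₁ + d(p₂)p₁² − d(p₁)p₁p₂. -/
theorem commuting_jordan_derivation_triple_left {P : Type*} [Ring P]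
    (htf : ∀ p : P, 2 • p = 0 → p = 0) (d : P → P)
    (hadd : ∀ x y : P, d (x + y) = d x + d y)
    (hJ : ∀ p : P, d (p ^ 2) = d p * p + p * d p)
    (hC : ∀ p : P, d p * p = p * d p) :
    ∀ p₁ p₂ : P,
      d (p₁ * p₂ * p₁) = 3 • (d p₁ * p₂ * p₁) + d p₂ * p₁ ^ 2 - d p₁ * p₁ * p₂ := by
  let D : P →+ P := AddMonoidHom.mk' d hadd
  intro x y
  have hherstein := map_mul_mul_self D htf hJ x y
  have hlin := apply_mul_add_apply_mul_comm D hC x y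
  have hanti := apply_anticomm_commutator D hJ hC x y
  simp only [D, AddMonoidHom.mk'_apply] at hherstein hlin hanti
  rw [hherstein]
  linear_combination (norm := noncomm_ring) hanti - hlin * x - y * hC x
end

section
/- Let P be a 2-torsion free ring and let d : P → P be a commuting Jordan derivation. Then for all p₁, p₂ ∈ P, d(p₁p₂p₁) = p₁² d(p₂) + 3·p₁p₂ d(p₁) − p₂p₁ d(p₁). -/
/-!
Linearizing `d(x²) = d(x)x + x d(x)` at `(a, ab + ba)` and at `(a², b)` and subtracting gives Herstein's
identity `2 d(aba) = 2 (d(a)ba + ab d(a) + a d(b)a)`, valid for every Jordan derivation. Linearizing the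
commuting condition at `(a, ab + ba)` rewrites the right-hand side as `a² d(b) + 3 ab d(a) − ba d(a)`,
and 2-torsion freeness cancels the factor 2.
-/

namespace AddMonoidHom

variable {R : Type*} [Ring R]

def IsJordanDerivation (d : R →+ R) : Prop :=
  ∀ p : R, d (p ^ 2) = d p * p + p * d p

def IsCommuting (d : R →+ R) : Prop :=
  ∀ p : R, d p * p = p * d p

variable {d : R →+ R}

theorem IsCommuting.apply_mul_add_apply_mul_comm (hC : d.IsCommuting) (x y : R) :
    d x * y + d y * x = x * d y + y * d x := by
  have h := hC (x + y)
  rw [map_add] at h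
  linear_combination (norm := noncomm_ring) h - hC x - hC y

theorem IsJordanDerivation.map_mul_add_mul (hJ : d.IsJordanDerivation) (x y : R) :
    d (x * y + y * x) = d x * y + x * d y + d y * x + y * d x := by
  have h := hJ (x + y)
  have e : (x + y) ^ 2 = x ^ 2 + (x * y + y * x) + y ^ 2 := by noncomm_ring
  rw [e, map_add d (x ^ 2 + _), map_add d (x ^ 2), map_add d x y] at h
  linear_combination (norm := noncomm_ring) h - hJ x - hJ y

theorem IsJordanDerivation.two_smul_map_mul_mul_self (hJ : d.IsJordanDerivation) (a b : R) :
    2 • d (a * b * a) = 2 • (d a * b * a + a * b * d a + a * d b * a) := by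
  have h₁ := hJ.map_mul_add_mul a (a * b + b * a)
  have h₂ := hJ.map_mul_add_mul (a ^ 2) b
  have e : a * (a * b + b * a) + (a * b + b * a) * a
      = (a ^ 2 * b + b * a ^ 2) + (a * b * a + a * b * a) := by noncomm_ring
  rw [e, map_add d (a ^ 2 * b + _), map_add d (a * b * a), hJ.map_mul_add_mul a b] at h₁
  rw [hJ a] at h₂
  rw [two_smul, two_smul]
  linear_combination (norm := noncomm_ring) h₁ - h₂

theorem IsCommuting.derivation_triple_sum_eq (hC : d.IsCommuting) (hJ : d.IsJordanDerivation)
    (a b : R) :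
    d a * b * a + a * b * d a + a * d b * a
      = a ^ 2 * d b + 3 • (a * b * d a) - b * a * d a := by
  have h := hC.apply_mul_add_apply_mul_comm a (a * b + b * a)
  rw [hJ.map_mul_add_mul a b] at h
  linear_combination (norm := noncomm_ring)
    h - hC.apply_mul_add_apply_mul_comm a b * a - hC a * b - b * hC a - b * hC a

end AddMonoidHom

/-- Let P be a 2-torsion free ring and d a commuting Jordan derivation. Then
d(p₁p₂p₁) = p₁² d(p₂) + 3·p₁p₂ d(p₁) − p₂p₁ d(p₁). -/
theorem commuting_jordan_derivation_triple_right {P : Type*} [Ring P]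
    (htf : ∀ p : P, 2 • p = 0 → p = 0) (d : P → P)
    (hadd : ∀ x y : P, d (x + y) = d x + d y)
    (hJ : ∀ p : P, d (p ^ 2) = d p * p + p * d p)
    (hC : ∀ p : P, d p * p = p * d p) :
    ∀ p₁ p₂ : P,
      d (p₁ * p₂ * p₁) = p₁ ^ 2 * d p₂ + 3 • (p₁ * p₂ * d p₁) - p₂ * p₁ * d p₁ := by
  let D : P →+ P := AddMonoidHom.mk' d hadd
  have hJD : D.IsJordanDerivation := hJ
  have hCD : D.IsCommuting := hC
  intro a b
  have h := hJD.two_smul_map_mul_mul_self a b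
  rw [hCD.derivation_triple_sum_eq hJD, ← sub_eq_zero, ← smul_sub] at h
  exact sub_eq_zero.mp (htf _ h)
end

section
/- Let P be a 2-torsion free unital ring with a nontrivial idempotent e₁ and let d : P → P be a commuting Jordan derivation such that e₁ d(a) e₁ = 0 for all a ∈ e₁Pe₁ and e₂ d(b) e₂ = 0 for all b ∈ e₂Pe₂, where e₂ = 1 − e₁. Then d is the zero map. -/
/-- Theorem 2.1: a commuting Jordan derivation on a 2-torsion free unital ring with a
nontrivial idempotent is zero, provided the (1,1)-component of d on P₁₁ and the
(2,2)-component of d on P₂₂ vanish. -/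
theorem commuting_jordan_derivation_eq_zero_of_diag {P : Type*} [Ring P]
    (htf : ∀ p : P, 2 • p = 0 → p = 0)
    (e₁ : P) (he : e₁ * e₁ = e₁) (he0 : e₁ ≠ 0) (he1 : e₁ ≠ 1)
    (d : P → P)
    (hadd : ∀ x y : P, d (x + y) = d x + d y)
    (hJ : ∀ p : P, d (p ^ 2) = d p * p + p * d p)
    (hC : ∀ p : P, d p * p = p * d p)
    (h11 : ∀ a : P, (∃ x : P, a = e₁ * x * e₁) → e₁ * d a * e₁ = 0)
    (h22 : ∀ b : P, (∃ x : P, b = (1 - e₁) * x * (1 - e₁)) →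
      (1 - e₁) * d b * (1 - e₁) = 0) :
    ∀ p : P, d p = 0 := by
  set e₂ : P := 1 - e₁ with he₂def
  have hsum : e₁ + e₂ = 1 := by rw [he₂def]; abel
  have htf' : ∀ p : P, p + p = 0 → p = 0 := by
    intro p hp
    exact htf p (by rw [two_smul]; exact hp)
  have h0 : d 0 = 0 := by
    have h := hadd 0 0
    simp only [add_zero] at h
    exact (left_eq_add.mp h)
  -- polarized Jordan identity
  have hJ' : ∀ x y : P, d (x * y + y * x)
      = d x * y + x * d y + d y * x + y * d x := by
    intro x y
    have h := hJ (x + y)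
    rw [show (x + y) ^ 2 = x ^ 2 + (x * y + y * x) + y ^ 2 by noncomm_ring,
      hadd, hadd, hJ x, hJ y, hadd x y] at h
    linear_combination (norm := noncomm_ring) h
  -- d 1 = 0
  have hd1 : d 1 = 0 := by
    have h := hJ 1
    rw [one_pow, mul_one, one_mul] at h
    exact (left_eq_add.mp h)
  -- d e₁ = 0
  have hide1 : e₁ * d e₁ * e₁ = 0 := h11 e₁ ⟨e₁, by rw [he, he]⟩
  have hde : d e₁ = 0 := by
    have h := hJ e₁
    rw [sq, he, hC e₁] at h
    -- h : d e₁ = e₁ * d e₁ + e₁ * d e₁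
    have h2 : d e₁ * e₁ = e₁ * d e₁ * e₁ + e₁ * d e₁ * e₁ := by
      calc d e₁ * e₁ = (e₁ * d e₁ + e₁ * d e₁) * e₁ := by rw [← h]
        _ = e₁ * d e₁ * e₁ + e₁ * d e₁ * e₁ := add_mul _ _ _
    rw [hide1, add_zero] at h2
    have h3 : e₁ * d e₁ = 0 := by rw [← hC e₁]; exact h2
    rw [h3, add_zero] at h
    exact h
  have hd2 : d e₂ = 0 := by
    have h := hadd e₁ e₂
    rw [hsum, hd1, hde, zero_add] at h
    exact h.symm
  -- every d x commutes with e₁ (and hence e₂)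
  have hcomm : ∀ x : P, d x * e₁ = e₁ * d x := by
    intro x
    have h := hC (x + e₁)
    rw [hadd, hde, add_zero] at h
    have h' : d x * x + d x * e₁ = x * d x + e₁ * d x := by
      linear_combination (norm := noncomm_ring) h
    rw [hC x] at h'
    exact add_left_cancel h'
  have hcomm2 : ∀ x : P, d x * e₂ = e₂ * d x := by
    intro x
    rw [he₂def, mul_sub, sub_mul, mul_one, one_mul, hcomm]
  have he12 : e₂ * e₁ = 0 := by rw [he₂def, sub_mul, one_mul, he, sub_self]
  have he21 : e₁ * e₂ = 0 := by rw [he₂def, mul_sub, mul_one, he, sub_self]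
  have he2 : e₂ * e₂ = e₂ := by
    rw [he₂def, sub_mul, one_mul, mul_sub, mul_one, he]
    abel
  -- d vanishes on P₁₁
  have hP11 : ∀ x : P, d (e₁ * x * e₁) = 0 := by
    intro x
    set a := e₁ * x * e₁ with ha
    have t1 : a * e₂ = 0 := by rw [ha, mul_assoc, he21, mul_zero]
    have t2 : e₂ * a = 0 := by
      rw [ha, ← mul_assoc, ← mul_assoc, he12, zero_mul, zero_mul]
    have hae2 : a * e₂ + e₂ * a = 0 := by rw [t1, t2, add_zero]
    have h := hJ' a e₂
    rw [hae2, h0, hd2] at h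
    simp only [mul_zero, zero_mul, add_zero, zero_add] at h
    rw [hcomm2] at h
    -- h : 0 = e₂ * d a + e₂ * d a
    have h2 : e₂ * d a = 0 := htf' _ h.symm
    have h3 : d a * e₂ = 0 := by rw [hcomm2]; exact h2
    have h4 : d a = e₁ * d a := by
      have h' := add_mul e₁ e₂ (d a)
      rw [hsum, one_mul, h2, add_zero] at h'
      exact h'
    have h5 : d a = d a * e₁ := by
      have h' := mul_add (d a) e₁ e₂
      rw [hsum, mul_one, h3, add_zero] at h'
      exact h'
    calc d a = e₁ * d a := h4
      _ = e₁ * (d a * e₁) := by rw [← h5]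
      _ = e₁ * d a * e₁ := (mul_assoc _ _ _).symm
      _ = 0 := h11 a ⟨x, ha⟩
  -- d vanishes on P₂₂
  have hP22 : ∀ x : P, d (e₂ * x * e₂) = 0 := by
    intro x
    set a := e₂ * x * e₂ with ha
    have t1 : a * e₁ = 0 := by rw [ha, mul_assoc, he12, mul_zero]
    have t2 : e₁ * a = 0 := by
      rw [ha, ← mul_assoc, ← mul_assoc, he21, zero_mul, zero_mul]
    have hae1 : a * e₁ + e₁ * a = 0 := by rw [t1, t2, add_zero]
    have h := hJ' a e₁
    rw [hae1, h0, hde] at h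
    simp only [mul_zero, zero_mul, add_zero, zero_add] at h
    rw [hcomm] at h
    have h2 : e₁ * d a = 0 := htf' _ h.symm
    have h3 : d a * e₁ = 0 := by rw [hcomm]; exact h2
    have h4 : d a = e₂ * d a := by
      have h' := add_mul e₁ e₂ (d a)
      rw [hsum, one_mul, h2, zero_add] at h'
      exact h'
    have h5 : d a = d a * e₂ := by
      have h' := mul_add (d a) e₁ e₂
      rw [hsum, mul_one, h3, zero_add] at h'
      exact h'
    calc d a = e₂ * d a := h4
      _ = e₂ * (d a * e₂) := by rw [← h5]
      _ = e₂ * d a * e₂ := (mul_assoc _ _ _).symm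
      _ = 0 := h22 a ⟨x, ha⟩
  -- d vanishes on P₁₂
  have hP12 : ∀ x : P, d (e₁ * x * e₂) = 0 := by
    intro x
    set a := e₁ * x * e₂ with ha
    have t1 : a * e₁ = 0 := by rw [ha, mul_assoc, he12, mul_zero]
    have t2 : e₁ * a = a := by rw [ha, ← mul_assoc, ← mul_assoc, he]
    have hae1 : a * e₁ + e₁ * a = a := by rw [t1, t2, zero_add]
    have h1 := hJ' a e₁
    rw [hae1, hde] at h1
    simp only [mul_zero, zero_mul, add_zero, zero_add] at h1
    rw [hcomm] at h1
    -- h1 : d a = e₁ * d a + e₁ * d a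
    have t3 : a * e₂ = a := by rw [ha, mul_assoc, he2]
    have t4 : e₂ * a = 0 := by
      rw [ha, ← mul_assoc, ← mul_assoc, he12, zero_mul, zero_mul]
    have hae2 : a * e₂ + e₂ * a = a := by rw [t3, t4, add_zero]
    have h2 := hJ' a e₂
    rw [hae2, hd2] at h2
    simp only [mul_zero, zero_mul, add_zero, zero_add] at h2
    rw [hcomm2] at h2
    -- h2 : d a = e₂ * d a + e₂ * d a
    have h3 : e₂ * d a = 0 := by
      calc e₂ * d a = e₂ * (e₁ * d a + e₁ * d a) := by rw [← h1]
        _ = 0 := by rw [mul_add, ← mul_assoc, he12, zero_mul, add_zero]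
    rw [h3, add_zero] at h2
    exact h2
  -- d vanishes on P₂₁
  have hP21 : ∀ x : P, d (e₂ * x * e₁) = 0 := by
    intro x
    set a := e₂ * x * e₁ with ha
    have t1 : a * e₁ = a := by rw [ha, mul_assoc, he]
    have t2 : e₁ * a = 0 := by
      rw [ha, ← mul_assoc, ← mul_assoc, he21, zero_mul, zero_mul]
    have hae1 : a * e₁ + e₁ * a = a := by rw [t1, t2, add_zero]
    have h1 := hJ' a e₁
    rw [hae1, hde] at h1
    simp only [mul_zero, zero_mul, add_zero, zero_add] at h1
    rw [hcomm] at h1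
    have t3 : a * e₂ = 0 := by rw [ha, mul_assoc, he21, mul_zero]
    have t4 : e₂ * a = a := by rw [ha, ← mul_assoc, ← mul_assoc, he2]
    have hae2 : a * e₂ + e₂ * a = a := by rw [t3, t4, zero_add]
    have h2 := hJ' a e₂
    rw [hae2, hd2] at h2
    simp only [mul_zero, zero_mul, add_zero, zero_add] at h2
    rw [hcomm2] at h2
    have h3 : e₂ * d a = 0 := by
      calc e₂ * d a = e₂ * (e₁ * d a + e₁ * d a) := by rw [← h1]
        _ = 0 := by rw [mul_add, ← mul_assoc, he12, zero_mul, add_zero]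
    rw [h3, add_zero] at h2
    exact h2
  intro p
  have hdecomp : p = e₁ * p * e₁ + e₁ * p * e₂ + (e₂ * p * e₁ + e₂ * p * e₂) := by
    rw [he₂def]; noncomm_ring
  calc d p = d (e₁ * p * e₁ + e₁ * p * e₂ + (e₂ * p * e₁ + e₂ * p * e₂)) := by
        rw [← hdecomp]
    _ = d (e₁ * p * e₁) + d (e₁ * p * e₂) + (d (e₂ * p * e₁) + d (e₂ * p * e₂)) := by
        rw [hadd, hadd, hadd]
    _ = 0 := by rw [hP11, hP12, hP21, hP22]; simp
end

section
/- Let P be a 2-torsion free unital ring with a nontrivial idempotent e₁, set e₂ = 1 − e₁, and let d : P → P be a commuting Jordan derivation. Then d(e₁) = 0 and d(e₂) = 0. -/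
/-! The Jordan identity at an idempotent `e`, combined with `d e * e = e * d e`, gives
`d e = 2 • (e * d e)`; multiplying on the left by `e` yields `e * d e = 2 • (e * d e)`, so
`e * d e = 0` and hence `d e = 0`. Since `1 - e₁` is idempotent too, the same argument applies. -/

theorem IsIdempotentElem.eq_zero_of_jordan_of_commute {R : Type*} [Semiring R] [IsLeftCancelAdd R]
    {d : R → R} {e : R} (he : IsIdempotentElem e)
    (hJ : d (e ^ 2) = d e * e + e * d e) (hC : d e * e = e * d e) : d e = 0 := by
  have hd : d e = e * d e + e * d e := by rwa [sq, he.eq, hC] at hJ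
  have hed : e * d e + e * d e = e * d e + 0 := by
    calc e * d e + e * d e = e * (e * d e + e * d e) := by rw [mul_add, ← mul_assoc, he.eq]
      _ = e * d e + 0 := by rw [← hd, add_zero]
  rw [hd, add_left_cancel hed, add_zero]

theorem commuting_jordan_derivation_idempotent_general {P : Type*} [Ring P]
    (e₁ : P) (he : e₁ * e₁ = e₁)
    (d : P → P)
    (hJ : ∀ p : P, d (p ^ 2) = d p * p + p * d p)
    (hC : ∀ p : P, d p * p = p * d p) :
    d e₁ = 0 ∧ d (1 - e₁) = 0 :=
  have he' : IsIdempotentElem e₁ := he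
  ⟨he'.eq_zero_of_jordan_of_commute (hJ _) (hC _),
    he'.one_sub.eq_zero_of_jordan_of_commute (hJ _) (hC _)⟩

/-- Lemma 2.2: d(e₁) = 0 and d(e₂) = 0 for a commuting Jordan derivation. -/
theorem commuting_jordan_derivation_idempotent {P : Type*} [Ring P]
    (htf : ∀ p : P, 2 • p = 0 → p = 0)
    (e₁ : P) (he : e₁ * e₁ = e₁) (he0 : e₁ ≠ 0) (he1 : e₁ ≠ 1)
    (d : P → P)
    (hadd : ∀ x y : P, d (x + y) = d x + d y)
    (hJ : ∀ p : P, d (p ^ 2) = d p * p + p * d p)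
    (hC : ∀ p : P, d p * p = p * d p) :
    d e₁ = 0 ∧ d (1 - e₁) = 0 :=
  commuting_jordan_derivation_idempotent_general e₁ he d hJ hC
end

section
/- Let P be a 2-torsion free unital ring with a nontrivial idempotent e₁ and let d : P → P be a commuting Jordan derivation. Then for every a ∈ e₁Pe₁ one has d(a) = e₁ d(a) e₁. -/
/-!
Applying the Jordan identity to the idempotent `e₁` and using `d e₁ * e₁ = e₁ * d e₁` gives
`d e₁ = 2 e₁ d(e₁)`, whence `e₁ d(e₁) = 0` and `d e₁ = 0`. For `a ∈ e₁Pe₁` one has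
`(a + e₁)² = a² + 2a + e₁`, so the Jordan identity at `a + e₁` yields `2 d(a) = d(a) e₁ + e₁ d(a)`.
Multiplying by `e₁` on either side shows `d(a) e₁ = e₁ d(a) e₁ = e₁ d(a)`, so
`2 d(a) = 2 e₁ d(a) e₁`, and 2-torsion freeness finishes.
-/

section

variable {P : Type*} [Ring P] {e : P}

theorem eq_mul_mul_of_add_self_eq_mul_add_mul (htf : ∀ p : P, 2 • p = 0 → p = 0)
    (he : IsIdempotentElem e) {x : P} (hx : x + x = x * e + e * x) : x = e * x * e := by
  have hleft : e * x = e * x * e := by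
    have h := congrArg (e * ·) hx
    simp only [mul_add, ← mul_assoc, he.eq] at h
    exact add_right_cancel h
  have hright : x * e = e * x * e := by
    have h := congrArg (· * e) hx
    simp only [add_mul, mul_assoc, he.eq] at h
    rw [add_left_cancel h, mul_assoc]
  have htwo : x + x = e * x * e + e * x * e := hx.trans (congrArg₂ (· + ·) hright hleft)
  refine sub_eq_zero.mp (htf _ ?_)
  rw [two_smul, sub_add_sub_comm, htwo, sub_self]

theorem map_eq_zero_of_isIdempotentElem {d : P → P} (he : IsIdempotentElem e)
    (hJ : d (e ^ 2) = d e * e + e * d e) (hC : d e * e = e * d e) : d e = 0 := by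
  have hde : d e = e * d e + e * d e := by
    rw [sq, he.eq] at hJ
    rwa [hC] at hJ
  have hede : e * d e = 0 := by
    have h := congrArg (e * ·) hde
    simp only [mul_add, ← mul_assoc, he.eq] at h
    exact left_eq_add.mp h
  rw [hde, hede, add_zero]

theorem map_add_self_of_mem_corner {d : P → P} (he : IsIdempotentElem e)
    (hadd : ∀ x y : P, d (x + y) = d x + d y)
    (hJ : ∀ p : P, d (p ^ 2) = d p * p + p * d p) (hde : d e = 0)
    {a : P} (hea : e * a = a) (hae : a * e = a) : d a + d a = d a * e + e * d a := by
  have hsq : (a + e) ^ 2 = a ^ 2 + (a + a + e) := by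
    rw [sq, sq, add_mul, mul_add, mul_add, hae, hea, he.eq]
    abel
  have h := hJ (a + e)
  rw [hsq, hadd, hadd, hadd, hJ, hadd, hde, add_zero, add_zero, mul_add, add_mul] at h
  refine add_left_cancel (a := d a * a + a * d a) ?_
  rw [h]
  abel

end

theorem commuting_jordan_derivation_eleven_general {P : Type*} [Ring P]
    (htf : ∀ p : P, 2 • p = 0 → p = 0)
    (e₁ : P) (he : e₁ * e₁ = e₁)
    (d : P → P)
    (hadd : ∀ x y : P, d (x + y) = d x + d y)
    (hJ : ∀ p : P, d (p ^ 2) = d p * p + p * d p)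
    (hC : ∀ p : P, d p * p = p * d p) :
    ∀ a : P, (∃ x : P, a = e₁ * x * e₁) → d a = e₁ * d a * e₁ := by
  rintro _ ⟨x, rfl⟩
  have hde : d e₁ = 0 := map_eq_zero_of_isIdempotentElem he (hJ e₁) (hC e₁)
  refine eq_mul_mul_of_add_self_eq_mul_add_mul htf he
    (map_add_self_of_mem_corner he hadd hJ hde ?_ ?_)
  · simp only [← mul_assoc, he]
  · simp only [mul_assoc, he]

/-- Lemma 2.3: for a ∈ e₁Pe₁, d(a) = e₁ d(a) e₁. -/
theorem commuting_jordan_derivation_eleven {P : Type*} [Ring P]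
    (htf : ∀ p : P, 2 • p = 0 → p = 0)
    (e₁ : P) (he : e₁ * e₁ = e₁) (he0 : e₁ ≠ 0) (he1 : e₁ ≠ 1)
    (d : P → P)
    (hadd : ∀ x y : P, d (x + y) = d x + d y)
    (hJ : ∀ p : P, d (p ^ 2) = d p * p + p * d p)
    (hC : ∀ p : P, d p * p = p * d p) :
    ∀ a : P, (∃ x : P, a = e₁ * x * e₁) → d a = e₁ * d a * e₁ :=
  commuting_jordan_derivation_eleven_general htf e₁ he d hadd hJ hC
end

section
/- Let P be a 2-torsion free unital ring with a nontrivial idempotent e₁, set e₂ = 1 − e₁, and let d : P → P be a commuting Jordan derivation. Then d(t) = 0 for every t ∈ e₂Pe₁. -/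
/-!
Linearizing `d (p ^ 2) = d p * p + p * d p` and `d p * p = p * d p` at the pair `(t, e₁)`, where
`t * e₁ = t` and `e₁ * t = 0`, gives `d t = d t * e₁ + e₁ * d t` and `d t * e₁ = e₁ * d t`
(using `d e₁ = 0`, which follows the same way from `e₁ ^ 2 = e₁`). Hence `d t = 2 (d t * e₁)`, and
multiplying by `e₁` on the right gives `d t * e₁ = 2 (d t * e₁)`, so `d t * e₁ = 0` and `d t = 0`.
-/

section

variable {R : Type*} [Ring R]

theorem IsIdempotentElem.eq_zero_of_eq_mul_add_mul {e a : R} (he : IsIdempotentElem e)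
    (ha : a = e * a + e * a) : a = 0 := by
  have hea : e * a = e * a + e * a := by
    conv_lhs => rw [ha]
    rw [mul_add, ← mul_assoc, he.eq]
  rw [ha, left_eq_add.mp hea, add_zero]

theorem IsIdempotentElem.eq_zero_of_eq_mul_add_mul' {e a : R} (he : IsIdempotentElem e)
    (ha : a = a * e + a * e) : a = 0 := by
  have hae : a * e = a * e + a * e := by
    conv_lhs => rw [ha]
    rw [add_mul, mul_assoc, he.eq]
  rw [ha, left_eq_add.mp hae, add_zero]

variable {d : R → R}

theorem map_mul_add_mul_of_jordan (hadd : ∀ x y : R, d (x + y) = d x + d y)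
    (hJ : ∀ p : R, d (p ^ 2) = d p * p + p * d p) (x y : R) :
    d (x * y + y * x) = d x * y + x * d y + d y * x + y * d x := by
  have hsq : d ((x + y) ^ 2) = d (x ^ 2) + d (x * y + y * x) + d (y ^ 2) := by
    rw [show (x + y) ^ 2 = x ^ 2 + (x * y + y * x) + y ^ 2 by noncomm_ring, hadd, hadd]
  rw [hJ, hJ, hJ, hadd] at hsq
  calc d (x * y + y * x)
      = (d x + d y) * (x + y) + (x + y) * (d x + d y) - (d x * x + x * d x)
          - (d y * y + y * d y) := by rw [hsq]; abel
    _ = d x * y + x * d y + d y * x + y * d x := by noncomm_ring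

theorem map_mul_add_map_mul_of_commuting (hadd : ∀ x y : R, d (x + y) = d x + d y)
    (hC : ∀ p : R, d p * p = p * d p) (x y : R) :
    d x * y + d y * x = x * d y + y * d x := by
  have h := hC (x + y)
  rw [hadd] at h
  have h' : d x * x + (d x * y + d y * x) + d y * y = d x * x + (x * d y + y * d x) + d y * y :=
    calc _ = (d x + d y) * (x + y) := by noncomm_ring
      _ = (x + y) * (d x + d y) := h
      _ = x * d x + (x * d y + y * d x) + y * d y := by noncomm_ring
      _ = _ := by rw [hC x, hC y]
  exact add_left_cancel (add_right_cancel h')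

theorem IsIdempotentElem.map_eq_zero_of_commuting_jordan {e : R} (he : IsIdempotentElem e)
    (hJ : ∀ p : R, d (p ^ 2) = d p * p + p * d p) (hC : ∀ p : R, d p * p = p * d p) :
    d e = 0 := by
  have h := hJ e
  rw [sq, he.eq, hC e] at h
  exact he.eq_zero_of_eq_mul_add_mul h

theorem map_eq_zero_of_mul_eq_self_of_mul_eq_zero
    (hadd : ∀ x y : R, d (x + y) = d x + d y)
    (hJ : ∀ p : R, d (p ^ 2) = d p * p + p * d p) (hC : ∀ p : R, d p * p = p * d p)
    {e t : R} (he : IsIdempotentElem e) (hte : t * e = t) (het : e * t = 0) : d t = 0 := by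
  have hde := he.map_eq_zero_of_commuting_jordan hJ hC
  have hsum : d t = d t * e + e * d t := by
    simpa [hte, het, hde] using map_mul_add_mul_of_jordan hadd hJ t e
  have hcomm : d t * e = e * d t := by
    simpa [hde] using map_mul_add_map_mul_of_commuting hadd hC t e
  rw [← hcomm] at hsum
  exact he.eq_zero_of_eq_mul_add_mul' hsum

end

theorem commuting_jordan_derivation_twentyone_general {P : Type*} [Ring P]
    (e₁ : P) (he : e₁ * e₁ = e₁)
    (d : P → P)
    (hadd : ∀ x y : P, d (x + y) = d x + d y)
    (hJ : ∀ p : P, d (p ^ 2) = d p * p + p * d p)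
    (hC : ∀ p : P, d p * p = p * d p) :
    ∀ t : P, (∃ x : P, t = (1 - e₁) * x * e₁) → d t = 0 := by
  rintro t ⟨x, rfl⟩
  refine map_eq_zero_of_mul_eq_self_of_mul_eq_zero hadd hJ hC he ?_ ?_
  · rw [mul_assoc _ e₁ e₁, he]
  · rw [← mul_assoc, ← mul_assoc, mul_sub, mul_one, he, sub_self, zero_mul, zero_mul]

/-- Lemma 2.5: d(t) = 0 for all t ∈ e₂Pe₁. -/
theorem commuting_jordan_derivation_twentyone {P : Type*} [Ring P]
    (htf : ∀ p : P, 2 • p = 0 → p = 0)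
    (e₁ : P) (he : e₁ * e₁ = e₁) (he0 : e₁ ≠ 0) (he1 : e₁ ≠ 1)
    (d : P → P)
    (hadd : ∀ x y : P, d (x + y) = d x + d y)
    (hJ : ∀ p : P, d (p ^ 2) = d p * p + p * d p)
    (hC : ∀ p : P, d p * p = p * d p) :
    ∀ t : P, (∃ x : P, t = (1 - e₁) * x * e₁) → d t = 0 :=
  commuting_jordan_derivation_twentyone_general e₁ he d hadd hJ hC
end

section
/- Let P be a 2-torsion free unital ring with a nontrivial idempotent e₁, set e₂ = 1 − e₁, and let d : P → P be a commuting Jordan derivation. Then for every b ∈ e₂Pe₂ one has d(b) = e₂ d(b) e₂. -/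
/-- Lemma 2.6: for b ∈ e₂Pe₂, d(b) = e₂ d(b) e₂. -/
theorem commuting_jordan_derivation_twentytwo {P : Type*} [Ring P]
    (htf : ∀ p : P, 2 • p = 0 → p = 0)
    (e₁ : P) (he : e₁ * e₁ = e₁) (he0 : e₁ ≠ 0) (he1 : e₁ ≠ 1)
    (d : P → P)
    (hadd : ∀ x y : P, d (x + y) = d x + d y)
    (hJ : ∀ p : P, d (p ^ 2) = d p * p + p * d p)
    (hC : ∀ p : P, d p * p = p * d p) :
    ∀ b : P, (∃ x : P, b = (1 - e₁) * x * (1 - e₁)) →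
      d b = (1 - e₁) * d b * (1 - e₁) := by
  rintro b ⟨x, hb⟩
  set e₂ : P := 1 - e₁ with he₂def
  -- d kills idempotents
  have did : ∀ e : P, e * e = e → d e = 0 := by
    intro e hee
    have h1 : d e = d e * e + e * d e := by
      have h := hJ e; rwa [sq, hee] at h
    have h2 : d e = e * d e + e * d e := by
      conv_lhs => rw [h1, hC e]
    have h3 : e * d e = 0 := by
      have h4 := congrArg (fun z => e * z) h2
      simp only [mul_add, ← mul_assoc, hee] at h4
      exact left_eq_add.mp h4
    rw [h2, h3, add_zero]
  have he2 : e₂ * e₂ = e₂ := by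
    rw [he₂def]
    simp only [mul_sub, sub_mul, one_mul, mul_one, he]
    abel
  have h12 : e₁ * e₂ = 0 := by rw [he₂def, mul_sub, mul_one, he, sub_self]
  have h21 : e₂ * e₁ = 0 := by rw [he₂def, sub_mul, one_mul, he, sub_self]
  have hde2 : d e₂ = 0 := did e₂ he2
  have hbe : b * e₂ = b := by rw [hb, mul_assoc, mul_assoc, he2, ← mul_assoc]
  have heb : e₂ * b = b := by rw [hb, ← mul_assoc, ← mul_assoc, he2]
  have hsq : (b + e₂) ^ 2 = b ^ 2 + (b + (b + e₂)) := by
    rw [sq, sq, add_mul, mul_add, mul_add, hbe, heb, he2]; abel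
  have L : d ((b + e₂) ^ 2) = d b * b + b * d b + (d b + (d b + 0)) := by
    rw [hsq, hadd, hadd, hadd, hJ b, hde2]
  have R : d ((b + e₂) ^ 2) = d b * b + b * d b + (d b * e₂ + e₂ * d b) := by
    rw [hJ (b + e₂), hadd b e₂, hde2, add_zero, add_mul, mul_add]; abel
  have key : d b * e₂ + e₂ * d b = d b + d b := by
    have E := L.symm.trans R
    rw [add_zero] at E
    have E' : d b * b + b * d b + (d b + d b)
        = d b * b + b * d b + (d b * e₂ + e₂ * d b) := by
      rw [← add_assoc] at E ⊢; exact E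
    exact (add_left_cancel E').symm
  -- e₁ d b e₁ = 0
  have h11 : e₁ * d b * e₁ = 0 := by
    have h := congrArg (fun z => e₁ * z * e₁) key
    simp only [mul_add, add_mul, ← mul_assoc] at h
    rw [mul_assoc (e₁ * d b) e₂ e₁, h21, mul_zero, h12, zero_mul, zero_mul,
      zero_add] at h
    apply htf
    rw [two_smul]
    exact h.symm
  -- e₁ d b e₂ = 0
  have hA : e₁ * d b * e₂ = 0 := by
    have h := congrArg (fun z => e₁ * z * e₂) key
    simp only [mul_add, add_mul, ← mul_assoc] at h
    rw [mul_assoc (e₁ * d b) e₂ e₂, he2, h12, zero_mul, zero_mul, add_zero] at h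
    have h' : e₁ * d b * e₂ + e₁ * d b * e₂ = e₁ * d b * e₂ + 0 := by
      rw [add_zero]; exact h.symm
    exact add_left_cancel h'
  -- e₂ d b e₁ = 0
  have hB : e₂ * d b * e₁ = 0 := by
    have h := congrArg (fun z => e₂ * z * e₁) key
    simp only [mul_add, add_mul, ← mul_assoc] at h
    rw [mul_assoc (e₂ * d b) e₂ e₁, h21, mul_zero, he2, zero_add] at h
    have h' : e₂ * d b * e₁ + e₂ * d b * e₁ = e₂ * d b * e₁ + 0 := by
      rw [add_zero]; exact h.symm
    exact add_left_cancel h'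
  have hone : e₁ + e₂ = 1 := by rw [he₂def]; abel
  have expand : d b = e₁ * d b * e₁ + e₁ * d b * e₂ + e₂ * d b * e₁ + e₂ * d b * e₂ := by
    calc d b = (e₁ + e₂) * d b * (e₁ + e₂) := by rw [hone, one_mul, mul_one]
      _ = e₁ * d b * e₁ + e₁ * d b * e₂ + e₂ * d b * e₁ + e₂ * d b * e₂ := by
          noncomm_ring
  conv_lhs => rw [expand]
  rw [h11, hA, hB, zero_add, zero_add, zero_add]
end

section
/- Let P be a 2-torsion free prime unital ring with a nontrivial idempotent e₁ and let d : P → P be a commuting Jordan derivation. Then d is the zero map. -/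
/-- Corollary 2.7: every commuting Jordan derivation on a 2-torsion free prime unital
ring with a nontrivial idempotent is the zero map. -/
theorem commuting_jordan_derivation_eq_zero {P : Type*} [Ring P]
    (htf : ∀ p : P, 2 • p = 0 → p = 0)
    (hprime : ∀ a b : P, (∀ x : P, a * x * b = 0) → a = 0 ∨ b = 0)
    (e₁ : P) (he : e₁ * e₁ = e₁) (he0 : e₁ ≠ 0) (he1 : e₁ ≠ 1)
    (d : P → P)
    (hadd : ∀ x y : P, d (x + y) = d x + d y)
    (hJ : ∀ p : P, d (p ^ 2) = d p * p + p * d p)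
    (hC : ∀ p : P, d p * p = p * d p) :
    ∀ p : P, d p = 0 := by
  have htf' : ∀ p : P, p + p = 0 → p = 0 := fun p h => htf p (by rwa [two_nsmul])
  have cancel : ∀ a : P, a = a + a → a = 0 := fun a h => left_eq_add.mp h
  have hd0 : d 0 = 0 := by
    have h := hadd 0 0
    rw [add_zero] at h
    exact cancel _ h
  -- d e₁ = 0
  have hde : d e₁ = 0 := by
    have h := hJ e₁
    rw [sq, he, hC e₁] at h
    -- h : d e₁ = e₁ * d e₁ + e₁ * d e₁
    have h2 : e₁ * d e₁ = e₁ * d e₁ + e₁ * d e₁ := by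
      conv_lhs => rw [h]
      rw [mul_add, ← mul_assoc, he]
    have h3 : e₁ * d e₁ = 0 := cancel _ h2
    rw [h, h3, add_zero]
  -- linearized commuting identity
  have hB : ∀ x y : P, d x * y + d y * x = x * d y + y * d x := by
    intro x y
    have h := hC (x + y)
    rw [hadd x y] at h
    have key : (d x * y + d y * x) - (x * d y + y * d x)
        = ((d x + d y) * (x + y) - (x + y) * (d x + d y))
          - (d x * x - x * d x) - (d y * y - y * d y) := by noncomm_ring
    rw [h, hC x, hC y] at key
    simp only [sub_self, sub_zero, zero_sub, neg_zero] at key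
    exact sub_eq_zero.mp key
  -- linearized Jordan identity
  have hJ2 : ∀ x y : P, d (x * y + y * x) = d x * y + x * d y + d y * x + y * d x := by
    intro x y
    have h := hJ (x + y)
    have hsq : (x + y) ^ 2 = x ^ 2 + (x * y + y * x) + y ^ 2 := by noncomm_ring
    rw [hsq, hadd, hadd, hJ x, hJ y, hadd x y] at h
    have key : d (x * y + y * x) - (d x * y + x * d y + d y * x + y * d x)
        = ((d x * x + x * d x) + d (x * y + y * x) + (d y * y + y * d y))
          - ((d x + d y) * (x + y) + (x + y) * (d x + d y)) := by noncomm_ring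
    rw [← h, sub_self] at key
    exact sub_eq_zero.mp key
  -- d x * e₁ = e₁ * d x
  have hE : ∀ x : P, d x * e₁ = e₁ * d x := by
    intro x
    have h := hB x e₁
    rw [hde, zero_mul, mul_zero, add_zero, zero_add] at h
    exact h
  -- d kills e₁ P (1-e₁)
  have hEF : ∀ a : P, d (e₁ * a * (1 - e₁)) = 0 := by
    intro a
    set x := e₁ * a * (1 - e₁) with hx
    have hx1 : x * e₁ = 0 := by
      have : x * e₁ = e₁ * a * (e₁ - e₁ * e₁) := by rw [hx]; noncomm_ring
      rw [this, he, sub_self, mul_zero]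
    have hxe : e₁ * x = x := by
      have : e₁ * x = e₁ * e₁ * a * (1 - e₁) := by rw [hx]; noncomm_ring
      rw [this, he]
    have h := hJ2 x e₁
    rw [hx1, hxe, zero_add, hde, mul_zero, zero_mul, add_zero, add_zero, hE x] at h
    -- h : d x = e₁ * d x + e₁ * d x
    have h2 : e₁ * d x = e₁ * d x + e₁ * d x := by
      conv_lhs => rw [h]
      rw [mul_add, ← mul_assoc, he]
    have h3 : e₁ * d x = 0 := cancel _ h2
    rw [h, h3, add_zero]
  -- d kills (1-e₁) P e₁
  have hFE : ∀ a : P, d ((1 - e₁) * a * e₁) = 0 := by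
    intro a
    set x := (1 - e₁) * a * e₁ with hx
    have hx1 : x * e₁ = x := by
      have : x * e₁ = (1 - e₁) * a * (e₁ * e₁) := by rw [hx]; noncomm_ring
      rw [this, he]
    have hxe : e₁ * x = 0 := by
      have : e₁ * x = (e₁ - e₁ * e₁) * a * e₁ := by rw [hx]; noncomm_ring
      rw [this, he, sub_self, zero_mul, zero_mul]
    have h := hJ2 x e₁
    rw [hx1, hxe, add_zero, hde, mul_zero, zero_mul, add_zero, add_zero, hE x] at h
    have h2 : e₁ * d x = e₁ * d x + e₁ * d x := by
      conv_lhs => rw [h]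
      rw [mul_add, ← mul_assoc, he]
    have h3 : e₁ * d x = 0 := cancel _ h2
    rw [h, h3, add_zero]
  -- d kills e₁ P e₁
  have hEE : ∀ a : P, d (e₁ * a * e₁) = 0 := by
    intro a
    set x := e₁ * a * e₁ with hx
    have hx1 : x * e₁ = x := by
      have : x * e₁ = e₁ * a * (e₁ * e₁) := by rw [hx]; noncomm_ring
      rw [this, he]
    have hxe : e₁ * x = x := by
      have : e₁ * x = e₁ * e₁ * a * e₁ := by rw [hx]; noncomm_ring
      rw [this, he]
    have h := hJ2 x e₁
    rw [hx1, hxe, hadd, hde, mul_zero, zero_mul, add_zero, add_zero, hE x] at h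
    -- h : d x + d x = e₁ * d x + e₁ * d x
    have heq : d x = e₁ * d x := by
      apply sub_eq_zero.mp
      apply htf'
      have : (d x - e₁ * d x) + (d x - e₁ * d x)
          = (d x + d x) - (e₁ * d x + e₁ * d x) := by noncomm_ring
      rw [this, h, sub_self]
    -- (1 - e₁) * d x = 0
    have hfd : (1 - e₁) * d x = 0 := by
      rw [sub_mul, one_mul, ← heq, sub_self]
    have key : ∀ b : P, d x * b * (1 - e₁) = 0 := by
      intro b
      have h1 := hB x (e₁ * b * (1 - e₁))
      rw [hEF b, zero_mul, mul_zero, add_zero, zero_add] at h1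
      -- h1 : d x * (e₁ * b * (1 - e₁)) = (e₁ * b * (1 - e₁)) * d x
      have hr : e₁ * b * (1 - e₁) * d x = e₁ * b * ((1 - e₁) * d x) := by
        rw [mul_assoc]
      rw [hr, hfd, mul_zero] at h1
      have hl : d x * (e₁ * b * (1 - e₁)) = d x * e₁ * b * (1 - e₁) := by
        noncomm_ring
      rw [hl, hE x, ← heq] at h1
      exact h1
    rcases hprime (d x) (1 - e₁) key with h' | h'
    · exact h'
    · exact absurd (sub_eq_zero.mp h').symm he1
  -- d kills (1-e₁) P (1-e₁)
  have hFF : ∀ a : P, d ((1 - e₁) * a * (1 - e₁)) = 0 := by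
    intro a
    set x := (1 - e₁) * a * (1 - e₁) with hx
    have hx1 : x * e₁ = 0 := by
      have : x * e₁ = (1 - e₁) * a * (e₁ - e₁ * e₁) := by rw [hx]; noncomm_ring
      rw [this, he, sub_self, mul_zero]
    have hxe : e₁ * x = 0 := by
      have : e₁ * x = (e₁ - e₁ * e₁) * a * (1 - e₁) := by rw [hx]; noncomm_ring
      rw [this, he, sub_self, zero_mul, zero_mul]
    have h := hJ2 x e₁
    rw [hx1, hxe, add_zero, hd0, hde, mul_zero, zero_mul, add_zero, add_zero, hE x] at h
    -- h : 0 = e₁ * d x + e₁ * d x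
    have hed : e₁ * d x = 0 := htf' _ h.symm
    have hde' : d x * e₁ = 0 := by rw [hE x, hed]
    have key : ∀ b : P, d x * b * e₁ = 0 := by
      intro b
      have h1 := hB x ((1 - e₁) * b * e₁)
      rw [hFE b, zero_mul, mul_zero, add_zero, zero_add] at h1
      have hr : (1 - e₁) * b * e₁ * d x = (1 - e₁) * b * (e₁ * d x) := by
        rw [mul_assoc]
      rw [hr, hed, mul_zero] at h1
      have hl : d x * ((1 - e₁) * b * e₁) = (d x - d x * e₁) * b * e₁ := by
        noncomm_ring
      rw [hl, hde', sub_zero] at h1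
      exact h1
    rcases hprime (d x) e₁ key with h' | h'
    · exact h'
    · exact absurd h' he0
  -- decompose
  intro p
  have hdecomp : p = e₁ * p * e₁ + (e₁ * p * (1 - e₁) + ((1 - e₁) * p * e₁ + (1 - e₁) * p * (1 - e₁))) := by
    noncomm_ring
  rw [hdecomp, hadd, hadd, hadd, hEE, hEF, hFE, hFF]
  simp
end

section
/- Let P be a 2-torsion free prime unital ring with a nontrivial idempotent e₁ and let {d_n}_{n=0}^{∞} be a commuting Jordan higher derivation on P, i.e., each d_n : P → P is additive, d₀ is the identity map, d_n(x²) = Σ_{k=0}^{n} d_{n−k}(x) d_k(x) for all x ∈ P and all n, and d_n(x)x = x d_n(x) for all x ∈ P and all n. Then d_n = 0 for all n ≥ 1. -/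
/-- Commuting Jordan higher derivations on a 2-torsion free prime unital ring with a
nontrivial idempotent vanish for all n ≥ 1. -/
theorem commuting_jordan_higher_derivation_eq_zero {P : Type*} [Ring P]
    (htf : ∀ p : P, 2 • p = 0 → p = 0)
    (hprime : ∀ a b : P, (∀ x : P, a * x * b = 0) → a = 0 ∨ b = 0)
    (e₁ : P) (he : e₁ * e₁ = e₁) (he0 : e₁ ≠ 0) (he1 : e₁ ≠ 1)
    (d : ℕ → P → P)
    (hadd : ∀ (n : ℕ) (x y : P), d n (x + y) = d n x + d n y)
    (hzero : ∀ x : P, d 0 x = x)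
    (hJ : ∀ (n : ℕ) (x : P),
      d n (x ^ 2) = ∑ k ∈ Finset.range (n + 1), d (n - k) x * d k x)
    (hC : ∀ (n : ℕ) (x : P), d n x * x = x * d n x) :
    ∀ n : ℕ, 1 ≤ n → ∀ x : P, d n x = 0 := by
  have htf' : ∀ p : P, p + p = 0 → p = 0 := fun p h => htf p (by rwa [two_smul])
  intro n
  induction n using Nat.strong_induction_on with
  | _ n IH =>
  intro hn
  obtain ⟨m, rfl⟩ : ∃ m, n = m + 1 := ⟨n - 1, (Nat.succ_pred_eq_of_pos hn).symm⟩
  -- D := d (m+1) is a Jordan derivation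
  have hJD : ∀ x : P, d (m + 1) (x ^ 2) = d (m + 1) x * x + x * d (m + 1) x := by
    intro x
    rw [hJ (m + 1) x, Finset.sum_range_succ, Finset.sum_range_succ']
    have hz : ∀ i ∈ Finset.range m, d (m + 1 - (i + 1)) x * d (i + 1) x = 0 := by
      intro i hi
      simp only [Finset.mem_range] at hi
      rw [IH (i + 1) (by omega) (by omega) x, mul_zero]
    rw [Finset.sum_eq_zero hz]
    simp [hzero]
  -- linearized Jordan identity
  have hlin : ∀ x y : P, d (m + 1) (x * y + y * x)
      = d (m + 1) x * y + x * d (m + 1) y + d (m + 1) y * x + y * d (m + 1) x := by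
    intro x y
    have h1 := hJD (x + y)
    have h2 : (x + y) ^ 2 = x ^ 2 + (x * y + y * x) + y ^ 2 := by noncomm_ring
    rw [hadd (m + 1) x y, h2, hadd, hadd, hJD x, hJD y] at h1
    linear_combination (norm := noncomm_ring) h1
  -- linearized commuting identity
  have hcomm : ∀ x y : P, d (m + 1) x * y + d (m + 1) y * x
      = y * d (m + 1) x + x * d (m + 1) y := by
    intro x y
    have h := hC (m + 1) (x + y)
    rw [hadd] at h
    have hx := hC (m + 1) x
    have hy := hC (m + 1) y
    linear_combination (norm := noncomm_ring) h - hx - hy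
  -- D vanishes on idempotents
  have hide : ∀ f : P, f * f = f → d (m + 1) f = 0 := by
    intro f hf
    have h1 : d (m + 1) f = d (m + 1) f * f + f * d (m + 1) f := by
      have h := hJD f; rwa [sq, hf] at h
    have h2 : d (m + 1) f = f * d (m + 1) f + f * d (m + 1) f := by
      rwa [hC (m + 1) f] at h1
    have h3 : f * d (m + 1) f = 0 := by
      have h4 : f * d (m + 1) f = f * d (m + 1) f + f * d (m + 1) f := by
        conv_lhs => rw [h2]
        rw [mul_add, ← mul_assoc, hf]
      exact left_eq_add.mp h4
    rw [h2, h3, add_zero]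
  have De : d (m + 1) e₁ = 0 := hide e₁ he
  have he₂ : (1 - e₁) * (1 - e₁) = 1 - e₁ := by
    rw [sub_mul, one_mul, mul_sub, mul_one, he]; abel
  have De₂ : d (m + 1) (1 - e₁) = 0 := hide (1 - e₁) he₂
  -- D x commutes with e₁ and 1 - e₁
  have hCe : ∀ x : P, d (m + 1) x * e₁ = e₁ * d (m + 1) x := by
    intro x
    have h := hcomm x e₁
    rw [De] at h
    simpa using h
  have hCe₂ : ∀ x : P, d (m + 1) x * (1 - e₁) = (1 - e₁) * d (m + 1) x := by
    intro x
    rw [mul_sub, sub_mul, mul_one, one_mul, hCe]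
  -- off-diagonal Peirce components
  have key12 : ∀ f : P, f * f = f → d (m + 1) f = 0 →
      (∀ x : P, d (m + 1) x * f = f * d (m + 1) x) →
      ∀ y : P, d (m + 1) (f * y * (1 - f)) = 0 := by
    intro f hf Df hCf y
    set a := f * y * (1 - f) with ha
    have hea : f * a = a := by rw [ha, ← mul_assoc, ← mul_assoc, hf]
    have hae : a * f = 0 := by
      rw [ha, mul_assoc, sub_mul, one_mul, hf, sub_self, mul_zero]
    have h1 : d (m + 1) a = f * d (m + 1) a + d (m + 1) a * f := by
      have h := hlin f a
      rw [hea, hae, add_zero, Df] at h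
      simpa using h
    have h2 : d (m + 1) a = d (m + 1) a * f + d (m + 1) a * f := by
      rw [← hCf a] at h1; exact h1
    have h3 : d (m + 1) a * f = 0 := by
      have h4 : d (m + 1) a * f = d (m + 1) a * f + d (m + 1) a * f := by
        conv_lhs => rw [h2]
        rw [add_mul, mul_assoc, hf]
      exact left_eq_add.mp h4
    rw [h2, h3, add_zero]
  have hP12 : ∀ y : P, d (m + 1) (e₁ * y * (1 - e₁)) = 0 := key12 e₁ he De hCe
  have hP21' : ∀ y : P, d (m + 1) ((1 - e₁) * y * (1 - (1 - e₁))) = 0 :=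
    key12 (1 - e₁) he₂ De₂ hCe₂
  have hP21 : ∀ y : P, d (m + 1) ((1 - e₁) * y * e₁) = 0 := by
    intro y
    have h := hP21' y
    rwa [sub_sub_cancel] at h
  -- diagonal Peirce components
  have key11 : ∀ f : P, f * f = f → d (m + 1) f = 0 →
      (∀ x : P, d (m + 1) x * f = f * d (m + 1) x) →
      (∀ z : P, d (m + 1) (f * z * (1 - f)) = 0) →
      (1 : P) - f ≠ 0 →
      ∀ y : P, d (m + 1) (f * y * f) = 0 := by
    intro f hf Df hCf hoff h1f y
    set a := f * y * f with ha
    have hf' : ∀ X : P, f * (f * X) = f * X := fun X => by rw [← mul_assoc, hf]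
    have h0 : (1 - f) * f = 0 := by rw [sub_mul, one_mul, hf, sub_self]
    have h0' : ∀ X : P, (1 - f) * (f * X) = 0 := fun X => by
      rw [← mul_assoc, h0, zero_mul]
    have hea : f * a = a := by rw [ha, ← mul_assoc, ← mul_assoc, hf]
    have hae : a * f = a := by rw [ha, mul_assoc, mul_assoc, hf, ← mul_assoc]
    -- D a = f * D a
    have h1 : d (m + 1) a + d (m + 1) a = f * d (m + 1) a + f * d (m + 1) a := by
      have h := hlin f a
      rw [hea, hae, hadd, Df] at h
      rw [← hCf a] at h
      -- h : D a + D a = 0 * a + f * D a + f * D a + a * 0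
      simpa [← hCf a] using h
    have hfa : f * d (m + 1) a = d (m + 1) a := by
      have h5 : (d (m + 1) a - f * d (m + 1) a) + (d (m + 1) a - f * d (m + 1) a) = 0 := by
        linear_combination (norm := noncomm_ring) h1
      have h6 := htf' _ h5
      exact (sub_eq_zero.mp h6).symm
    have hfa2 : d (m + 1) a * f = d (m + 1) a := by rw [hCf a, hfa]
    -- key identity: D a * z * (1 - f) = 0 for all z
    have hkey : ∀ z : P, d (m + 1) a * z * (1 - f) = 0 := by
      intro z
      set b := f * z * (1 - f) with hb
      have hab : a * b = f * (y * (f * z)) * (1 - f) := by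
        rw [ha, hb]
        simp only [mul_assoc, hf']
      have hba : b * a = 0 := by
        rw [hb, ha]
        simp only [mul_assoc, h0', mul_zero]
      have h := hlin a b
      rw [hba, add_zero, hab, hoff (y * (f * z)), hoff z] at h
      -- h : 0 = D a * b + a * 0 + 0 * a + b * D a
      have h7 : (0 : P) = d (m + 1) a * b + b * d (m + 1) a := by simpa using h
      have h8 : b * d (m + 1) a = 0 := by
        rw [hb, ← hfa]
        simp only [mul_assoc, h0', mul_zero]
      rw [h8, add_zero] at h7
      rw [hb] at h7
      calc d (m + 1) a * z * (1 - f)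
          = d (m + 1) a * (f * z * (1 - f)) := by
            conv_lhs => rw [← hfa2]
            simp only [mul_assoc]
        _ = 0 := h7.symm
    rcases hprime (d (m + 1) a) (1 - f) hkey with h | h
    · exact h
    · exact absurd h h1f
  have h1e : (1 : P) - e₁ ≠ 0 := fun h => he1 (by rw [sub_eq_zero] at h; exact h.symm)
  have hP11 : ∀ y : P, d (m + 1) (e₁ * y * e₁) = 0 := key11 e₁ he De hCe hP12 h1e
  have hP22' : ∀ y : P, d (m + 1) ((1 - e₁) * y * (1 - e₁)) = 0 := by
    intro y
    have h := key11 (1 - e₁) he₂ De₂ hCe₂ hP21' (by rwa [sub_sub_cancel]) y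
    exact h
  -- assemble
  intro x
  have hx : x = e₁ * x * e₁ + e₁ * x * (1 - e₁)
      + ((1 - e₁) * x * e₁ + (1 - e₁) * x * (1 - e₁)) := by noncomm_ring
  conv_lhs => rw [hx]
  rw [hadd, hadd, hadd, hP11 x, hP12 x, hP21 x, hP22' x]
  simp
end

section
/- Let P be a 2-torsion free prime unital ring with a nontrivial idempotent e₁, set e₂ = 1 − e₁, and let D : P → P be a commuting Jordan left centralizer such that e₁ D(m) e₂ = 0 for all m ∈ e₁Pe₂. Then D is the zero map. -/
/-! Linearizing `D (p ^ 2) = D p * p` at `p + 1` shows `D x = c * x` with `c = D 1`, and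
linearizing `D p * p = p * D p` in the same way makes `c` central. The hypothesis on the Peirce
corner `e₁ P e₂` then reads `c e₁ P e₂ = 0`, so primeness gives `c e₁ = 0`, hence
`e₁ P c = c e₁ P = 0` and `c = 0`. -/

section JordanLeftCentralizer

variable {R : Type*} [Ring R]

theorem apply_eq_apply_one_mul_of_map_sq {D : R → R} (hadd : ∀ x y, D (x + y) = D x + D y)
    (hJ : ∀ p, D (p ^ 2) = D p * p) (x : R) : D x = D 1 * x := by
  have h := hJ (x + 1)
  rw [show (x + 1) ^ 2 = x ^ 2 + (x + x) + 1 by noncomm_ring, hadd, hadd, hadd, hadd, hJ] at h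
  simp only [mul_add, add_mul, mul_one, add_assoc] at h
  exact add_right_cancel (add_left_cancel h)

theorem commute_of_mul_mul_self_eq {c : R} (h : ∀ p, c * p * p = p * (c * p)) (x : R) :
    Commute c x := by
  have hx1 := h (x + 1)
  simp only [mul_add, add_mul, mul_one, one_mul, mul_assoc] at hx1
  rw [← mul_assoc c x x, h x] at hx1
  exact add_right_cancel (add_left_cancel hx1)

theorem IsIdempotentElem.mul_mul_one_sub_mul_one_sub {e : R} (he : IsIdempotentElem e) (x : R) :
    e * (e * x * (1 - e)) * (1 - e) = e * x * (1 - e) := by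
  simp only [← mul_assoc, he.eq]
  rw [mul_assoc _ (1 - e), he.one_sub.eq]

theorem eq_zero_of_mul_eq_zero_of_forall_commute
    (hprime : ∀ a b : R, (∀ x : R, a * x * b = 0) → a = 0 ∨ b = 0)
    {c a : R} (hc : ∀ x, Commute c x) (ha : a ≠ 0) (h : c * a = 0) : c = 0 :=
  (hprime a c fun x => by rw [mul_assoc, ← (hc x).eq, ← mul_assoc, ← (hc a).eq, h, zero_mul])
    |>.resolve_left ha

end JordanLeftCentralizer

theorem commuting_jordan_left_centralizer_eq_zero_general {P : Type*} [Ring P]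
    (hprime : ∀ a b : P, (∀ x : P, a * x * b = 0) → a = 0 ∨ b = 0)
    (e₁ : P) (he : e₁ * e₁ = e₁) (he0 : e₁ ≠ 0) (he1 : e₁ ≠ 1)
    (D : P → P)
    (hadd : ∀ x y : P, D (x + y) = D x + D y)
    (hJ : ∀ p : P, D (p ^ 2) = D p * p)
    (hC : ∀ p : P, D p * p = p * D p)
    (h12 : ∀ m : P, (∃ x : P, m = e₁ * x * (1 - e₁)) → e₁ * D m * (1 - e₁) = 0) :
    ∀ p : P, D p = 0 := by
  have hD := apply_eq_apply_one_mul_of_map_sq hadd hJ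
  have hcen : ∀ x, Commute (D 1) x :=
    commute_of_mul_mul_self_eq fun p => by rw [← hD, hC, hD]
  have hce : D 1 * e₁ = 0 := by
    refine (hprime _ _ fun x => ?_).resolve_right (sub_ne_zero.2 he1.symm)
    have h := h12 _ ⟨x, rfl⟩
    rw [hD, ← (hcen e₁).left_comm, mul_assoc (D 1),
      IsIdempotentElem.mul_mul_one_sub_mul_one_sub he] at h
    simpa only [mul_assoc] using h
  have hc0 : D 1 = 0 := eq_zero_of_mul_eq_zero_of_forall_commute hprime hcen he0 hce
  intro p
  rw [hD, hc0, zero_mul]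

/-- Theorem 3.1: a commuting Jordan left centralizer D on a 2-torsion free prime unital
ring with a nontrivial idempotent, satisfying e₁ D(m) e₂ = 0 for all m ∈ e₁Pe₂,
is the zero map. -/
theorem commuting_jordan_left_centralizer_eq_zero {P : Type*} [Ring P]
    (htf : ∀ p : P, 2 • p = 0 → p = 0)
    (hprime : ∀ a b : P, (∀ x : P, a * x * b = 0) → a = 0 ∨ b = 0)
    (e₁ : P) (he : e₁ * e₁ = e₁) (he0 : e₁ ≠ 0) (he1 : e₁ ≠ 1)
    (D : P → P)
    (hadd : ∀ x y : P, D (x + y) = D x + D y)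
    (hJ : ∀ p : P, D (p ^ 2) = D p * p)
    (hC : ∀ p : P, D p * p = p * D p)
    (h12 : ∀ m : P, (∃ x : P, m = e₁ * x * (1 - e₁)) → e₁ * D m * (1 - e₁) = 0) :
    ∀ p : P, D p = 0 :=
  commuting_jordan_left_centralizer_eq_zero_general hprime e₁ he he0 he1 D hadd hJ hC h12
end

section
/- Let P be a 2-torsion free prime unital ring with a nontrivial idempotent e₁, set e₂ = 1 − e₁, and let D : P → P be a commuting Jordan left centralizer such that e₁ D(m) e₂ = 0 for all m ∈ e₁Pe₂. Then D(m) = 0 for every m ∈ e₁Pe₂. -/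
/-!
Write `e₂ = 1 - e₁` and let `m ∈ e₁Pe₂`. Since `(m + e₁)² = m + e₁` and `m² = 0`, the Jordan
identity gives `D m = D m · e₁ + D e₁ · m`, and `D e₁ = e₁ · D e₁` by commutativity, so both
`D m · e₂` and the corner `e₁ · D m · e₂` equal `D e₁ · m`. The hypothesis therefore forces
`D m · e₂ = 0`. Linearizing `[D p, p] = 0` at `p = e₂ z` and `m`, and compressing by
`e₂ · _ · e₁`, gives `e₂ z D m = 0` for all `z`; primeness and `e₂ ≠ 0` finish.
-/

structure IsCommutingJordanLeftCentralizer {P : Type*} [Ring P] (D : P →+ P) : Prop where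
  map_sq : ∀ p, D (p ^ 2) = D p * p
  commute : ∀ p, Commute (D p) p

section

variable {P : Type*} [Ring P] {D : P →+ P}

theorem map_mul_add_map_mul_eq_of_commute (hD : ∀ p, Commute (D p) p) (p q : P) :
    D p * q + D q * p = p * D q + q * D p := by
  calc D p * q + D q * p = (D p + D q) * (p + q) - D p * p - D q * q := by noncomm_ring
    _ = (p + q) * (D p + D q) - p * D p - q * D q := by
      rw [← map_add, (hD _).eq, (hD p).eq, (hD q).eq]
    _ = p * D q + q * D p := by noncomm_ring

theorem mul_mul_map_eq_zero_of_commute (hD : ∀ p, Commute (D p) p) {e m : P}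
    (he : IsIdempotentElem e) (hem : e * m = m) (hme : m * e = 0) (hm : D m * (1 - e) = 0)
    (z : P) : (1 - e) * z * D m = 0 := by
  have hme' : D m * e = D m := by
    rw [mul_sub, mul_one, sub_eq_zero] at hm; exact hm.symm
  have hem' : (1 - e) * m = 0 := by rw [sub_mul, one_mul, hem, sub_self]
  have h := congrArg (fun t => (1 - e) * t * e)
    (map_mul_add_map_mul_eq_of_commute hD ((1 - e) * z) m)
  simp only [← mul_assoc, hm, zero_mul, add_zero] at h
  simp only [mul_add, add_mul, mul_assoc, hme, mul_zero, hme'] at h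
  simp only [← mul_assoc, hem', zero_mul, add_zero, he.one_sub.eq] at h
  exact h.symm

end

namespace IsCommutingJordanLeftCentralizer

variable {P : Type*} [Ring P] {D : P →+ P} {e m : P}

theorem map_mul_self_of_isIdempotentElem (hD : IsCommutingJordanLeftCentralizer D)
    (he : IsIdempotentElem e) : D e * e = D e := by
  rw [← hD.map_sq, sq, he.eq]

theorem mul_map_self_of_isIdempotentElem (hD : IsCommutingJordanLeftCentralizer D)
    (he : IsIdempotentElem e) : e * D e = D e := by
  rw [← (hD.commute e).eq, hD.map_mul_self_of_isIdempotentElem he]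

theorem map_eq_map_mul_add_map_mul (hD : IsCommutingJordanLeftCentralizer D)
    (he : IsIdempotentElem e) (hem : e * m = m) (hme : m * e = 0) :
    D m = D m * e + D e * m := by
  have hmm : m * m = 0 := by nth_rewrite 2 [← hem]; rw [← mul_assoc, hme, zero_mul]
  have hDmm : D m * m = 0 := by rw [← hD.map_sq, sq, hmm, map_zero]
  have hsq : (m + e) ^ 2 = m + e := by
    rw [sq, mul_add, add_mul, add_mul, hmm, hme, hem, he.eq, zero_add, zero_add]
  have h := hD.map_sq (m + e)
  rw [hsq, map_add, add_mul, mul_add, mul_add, hDmm, zero_add,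
    hD.map_mul_self_of_isIdempotentElem he, ← add_assoc] at h
  exact add_right_cancel h

theorem map_mul_one_sub_eq_mul_map_mul_one_sub (hD : IsCommutingJordanLeftCentralizer D)
    (he : IsIdempotentElem e) (hem : e * m = m) (hme : m * e = 0) :
    D m * (1 - e) = e * D m * (1 - e) := by
  have he' : e * (1 - e) = 0 := by rw [mul_sub, mul_one, he.eq, sub_self]
  have hm' : m * (1 - e) = m := by rw [mul_sub, mul_one, hme, sub_zero]
  rw [hD.map_eq_map_mul_add_map_mul he hem hme]
  simp only [mul_add, add_mul, mul_assoc, he', mul_zero, zero_add, hm']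
  rw [← mul_assoc e, hD.mul_map_self_of_isIdempotentElem he]

end IsCommutingJordanLeftCentralizer

theorem commuting_jordan_left_centralizer_twelve_general {P : Type*} [Ring P]
    (hprime : ∀ a b : P, (∀ x : P, a * x * b = 0) → a = 0 ∨ b = 0)
    (e₁ : P) (he : e₁ * e₁ = e₁) (he1 : e₁ ≠ 1)
    (D : P → P)
    (hadd : ∀ x y : P, D (x + y) = D x + D y)
    (hJ : ∀ p : P, D (p ^ 2) = D p * p)
    (hC : ∀ p : P, D p * p = p * D p)
    (h12 : ∀ m : P, (∃ x : P, m = e₁ * x * (1 - e₁)) → e₁ * D m * (1 - e₁) = 0) :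
    ∀ m : P, (∃ x : P, m = e₁ * x * (1 - e₁)) → D m = 0 := by
  rintro m ⟨x, rfl⟩
  have hD : IsCommutingJordanLeftCentralizer (AddMonoidHom.mk' D hadd) := ⟨hJ, hC⟩
  have hem : e₁ * (e₁ * x * (1 - e₁)) = e₁ * x * (1 - e₁) := by
    rw [← mul_assoc, ← mul_assoc, he]
  have hme : e₁ * x * (1 - e₁) * e₁ = 0 := by
    rw [mul_assoc, sub_mul, one_mul, he, sub_self, mul_zero]
  have hm : D (e₁ * x * (1 - e₁)) * (1 - e₁) = 0 :=
    (hD.map_mul_one_sub_eq_mul_map_mul_one_sub he hem hme).trans (h12 _ ⟨x, rfl⟩)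
  exact (hprime _ _ (mul_mul_map_eq_zero_of_commute hD.commute he hem hme hm)).resolve_left
    (sub_ne_zero.mpr he1.symm)

/-- Lemma 3.1: D(m) = 0 for all m ∈ e₁Pe₂. -/
theorem commuting_jordan_left_centralizer_twelve {P : Type*} [Ring P]
    (htf : ∀ p : P, 2 • p = 0 → p = 0)
    (hprime : ∀ a b : P, (∀ x : P, a * x * b = 0) → a = 0 ∨ b = 0)
    (e₁ : P) (he : e₁ * e₁ = e₁) (he0 : e₁ ≠ 0) (he1 : e₁ ≠ 1)
    (D : P → P)
    (hadd : ∀ x y : P, D (x + y) = D x + D y)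
    (hJ : ∀ p : P, D (p ^ 2) = D p * p)
    (hC : ∀ p : P, D p * p = p * D p)
    (h12 : ∀ m : P, (∃ x : P, m = e₁ * x * (1 - e₁)) → e₁ * D m * (1 - e₁) = 0) :
    ∀ m : P, (∃ x : P, m = e₁ * x * (1 - e₁)) → D m = 0 :=
  commuting_jordan_left_centralizer_twelve_general hprime e₁ he he1 D hadd hJ hC h12
end

section
/- Let P be a 2-torsion free prime unital ring with a nontrivial idempotent e₁, set e₂ = 1 − e₁, and let D : P → P be a commuting Jordan left centralizer such that e₁ D(m) e₂ = 0 for all m ∈ e₁Pe₂. Then D(a) = 0 for every a ∈ e₁Pe₁. -/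
/-!
Write `f = 1 - e₁` and `a = e₁ x e₁`, so that `a f = f a = 0`. Each Peirce component of `D a`
is killed by a sandwiched instance of a linearized identity: the linearized Jordan identity
`D(a m + m a) = D(a) m + D(m) a` at `m ∈ e₁Pf` gives `(e₁ D(a) e₁) P f = 0`, and the linearized
commuting identity `D(a) q + D(q) a = a D(q) + q D(a)`, multiplied by `f` or `e₁` on either side
with `q ∈ fPe₁` or `q ∈ e₁Pf`, gives `f P (e₁ D(a) f) = 0`, `(f D(a) e₁) P f = 0` and
`e₁ P (f D(a) f) = 0`. Primeness, with `e₁ ≠ 0` and `f ≠ 0`, makes all four components vanish.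
-/

section

variable {P : Type*} [Ring P]

theorem eq_peirce_sum (e x : P) :
    x = e * x * e + e * x * (1 - e) + (1 - e) * x * e + (1 - e) * x * (1 - e) := by
  noncomm_ring

namespace IsIdempotentElem

variable {e : P}

theorem one_sub_mul_mul (he : IsIdempotentElem e) (z : P) : (1 - e) * (e * z) = 0 := by
  rw [← mul_assoc, he.one_sub_mul_self, zero_mul]

end IsIdempotentElem

namespace AddMonoidHom

variable (D : P →+ P)

theorem map_mul_add_mul_of_map_sq (hJ : ∀ p, D (p ^ 2) = D p * p) (p q : P) :
    D (p * q + q * p) = D p * q + D q * p := by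
  have hsq : (p + q) ^ 2 = p ^ 2 + (p * q + q * p) + q ^ 2 := by noncomm_ring
  have h := hJ (p + q)
  rw [hsq, map_add, map_add, hJ, hJ] at h
  calc D (p * q + q * p)
      = (D p * p + D (p * q + q * p) + D q * q) - D p * p - D q * q := by abel
    _ = D p * q + D q * p := by rw [h, map_add]; noncomm_ring

theorem mul_add_mul_eq_of_commuting (hC : ∀ p, D p * p = p * D p) (p q : P) :
    D p * q + D q * p = p * D q + q * D p := by
  have h := hC (p + q)
  rw [map_add] at h
  calc D p * q + D q * p = (D p + D q) * (p + q) - D p * p - D q * q := by noncomm_ring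
    _ = p * D q + q * D p := by rw [h, hC p, hC q]; noncomm_ring

variable {e : P}

theorem peirce₁₁_map_corner_mul_eq_zero (he : IsIdempotentElem e)
    (hJ : ∀ p, D (p ^ 2) = D p * p)
    (h12 : ∀ m, (∃ y, m = e * y * (1 - e)) → e * D m * (1 - e) = 0) (x y : P) :
    e * D (e * x * e) * e * y * (1 - e) = 0 := by
  have hma : e * y * (1 - e) * (e * x * e) = 0 := by
    simp only [mul_assoc, he.one_sub_mul_mul, mul_zero]
  have hJ' := D.map_mul_add_mul_of_map_sq hJ (e * x * e) (e * y * (1 - e))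
  rw [hma, add_zero] at hJ'
  have hm := h12 (e * x * e * (e * y * (1 - e)))
    ⟨x * e * y, by simp only [mul_assoc, he.mul_self_mul]⟩
  rw [hJ'] at hm
  simpa only [add_mul, mul_assoc, he.one_sub.eq, he.mul_one_sub_self, mul_zero, add_zero] using hm

theorem peirce₁₂_map_corner_mul_eq_zero (he : IsIdempotentElem e)
    (hC : ∀ p, D p * p = p * D p) (x y : P) :
    (1 - e) * y * (e * D (e * x * e) * (1 - e)) = 0 := by
  have h := congrArg (fun z ↦ (1 - e) * z * (1 - e))
    (D.mul_add_mul_eq_of_commuting hC (e * x * e) ((1 - e) * y * e))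
  simp only [mul_add, add_mul, mul_assoc, he.one_sub.mul_self_mul, he.one_sub_mul_mul,
    he.mul_one_sub_self, mul_zero, add_zero, zero_add] at h ⊢
  exact h.symm

theorem peirce₂₁_map_corner_mul_eq_zero (he : IsIdempotentElem e)
    (hC : ∀ p, D p * p = p * D p) (x y : P) :
    (1 - e) * D (e * x * e) * e * y * (1 - e) = 0 := by
  have h := congrArg (fun z ↦ (1 - e) * z * (1 - e))
    (D.mul_add_mul_eq_of_commuting hC (e * x * e) (e * y * (1 - e)))
  simp only [mul_add, add_mul, mul_assoc, he.one_sub_mul_mul, he.one_sub.eq, he.mul_one_sub_self,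
    mul_zero, zero_mul, add_zero] at h ⊢
  exact h

theorem peirce₂₂_map_corner_mul_eq_zero (he : IsIdempotentElem e)
    (hC : ∀ p, D p * p = p * D p)
    (h12 : ∀ m, (∃ y, m = e * y * (1 - e)) → e * D m * (1 - e) = 0) (x : P)
    (h11 : e * D (e * x * e) * e = 0) (y : P) :
    e * y * ((1 - e) * D (e * x * e) * (1 - e)) = 0 := by
  have h11' (z : P) : e * (D (e * x * e) * (e * z)) = 0 := by
    rw [← mul_assoc, ← mul_assoc, h11, zero_mul]
  have hm := h12 (e * y * (1 - e)) ⟨y, rfl⟩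
  have h := congrArg (fun z ↦ e * z * (1 - e))
    (D.mul_add_mul_eq_of_commuting hC (e * x * e) (e * y * (1 - e)))
  simp only [mul_assoc] at hm h11' ⊢
  simp only [mul_add, add_mul, mul_assoc, he.mul_self_mul, he.mul_one_sub_self, h11', hm, mul_zero,
    zero_add] at h
  exact h.symm

end AddMonoidHom

end

theorem commuting_jordan_left_centralizer_eleven_general {P : Type*} [Ring P]
    (hprime : ∀ a b : P, (∀ x : P, a * x * b = 0) → a = 0 ∨ b = 0)
    (e₁ : P) (he : e₁ * e₁ = e₁) (he0 : e₁ ≠ 0) (he1 : e₁ ≠ 1)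
    (D : P → P)
    (hadd : ∀ x y : P, D (x + y) = D x + D y)
    (hJ : ∀ p : P, D (p ^ 2) = D p * p)
    (hC : ∀ p : P, D p * p = p * D p)
    (h12 : ∀ m : P, (∃ x : P, m = e₁ * x * (1 - e₁)) → e₁ * D m * (1 - e₁) = 0) :
    ∀ a : P, (∃ x : P, a = e₁ * x * e₁) → D a = 0 := by
  rintro _ ⟨x, rfl⟩
  let D' : P →+ P := AddMonoidHom.mk' D hadd
  have hf0 : 1 - e₁ ≠ 0 := sub_ne_zero.mpr he1.symm
  have hD₁₁ := (hprime _ _ (D'.peirce₁₁_map_corner_mul_eq_zero he hJ h12 x)).resolve_right hf0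
  have hD₁₂ := (hprime _ _ (D'.peirce₁₂_map_corner_mul_eq_zero he hC x)).resolve_left hf0
  have hD₂₁ := (hprime _ _ (D'.peirce₂₁_map_corner_mul_eq_zero he hC x)).resolve_right hf0
  have hD₂₂ := (hprime _ _ (D'.peirce₂₂_map_corner_mul_eq_zero he hC h12 x hD₁₁)).resolve_left he0
  change D' (e₁ * x * e₁) = 0
  rw [eq_peirce_sum e₁ (D' _), hD₁₁, hD₁₂, hD₂₁, hD₂₂, add_zero, add_zero, add_zero]

/-- Lemma 3.2: D(a) = 0 for all a ∈ e₁Pe₁. -/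
theorem commuting_jordan_left_centralizer_eleven {P : Type*} [Ring P]
    (htf : ∀ p : P, 2 • p = 0 → p = 0)
    (hprime : ∀ a b : P, (∀ x : P, a * x * b = 0) → a = 0 ∨ b = 0)
    (e₁ : P) (he : e₁ * e₁ = e₁) (he0 : e₁ ≠ 0) (he1 : e₁ ≠ 1)
    (D : P → P)
    (hadd : ∀ x y : P, D (x + y) = D x + D y)
    (hJ : ∀ p : P, D (p ^ 2) = D p * p)
    (hC : ∀ p : P, D p * p = p * D p)
    (h12 : ∀ m : P, (∃ x : P, m = e₁ * x * (1 - e₁)) → e₁ * D m * (1 - e₁) = 0) :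
    ∀ a : P, (∃ x : P, a = e₁ * x * e₁) → D a = 0 :=
  commuting_jordan_left_centralizer_eleven_general hprime e₁ he he0 he1 D hadd hJ hC h12
end

section
/- Let P be a 2-torsion free prime unital ring with a nontrivial idempotent e₁, set e₂ = 1 − e₁, and let D : P → P be a commuting Jordan left centralizer such that e₁ D(m) e₂ = 0 for all m ∈ e₁Pe₂. Then D(t) = 0 for every t ∈ e₂Pe₁. -/
/-!
For an idempotent `q` the identities give `D q = D q * q = q * D q`, and for a square-zero `s`
they give `D s * s = s * D s = 0`. Applied to the idempotents `e₁ + m` with `m ∈ P₁₂` this shows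
`D e₁ * m = D m * e₂ = e₁ * D m * e₂ = 0`, so `D e₁ * P * e₂ = 0` and primeness forces `D e₁ = 0`.
Applied to `e₁ + t` with `t ∈ P₂₁` it then puts `D t = D (e₁ + t)` into `P₁₁`, where the
linearized commuting identity for `t` and `m ∈ P₁₂` collapses to `D t * m = 0`; hence
`D t * P * e₂ = 0` and `D t = 0`.
-/

theorem IsIdempotentElem.add_of_mul_self_eq_zero {R : Type*} [NonUnitalSemiring R] {e m : R}
    (he : IsIdempotentElem e) (hm : m * m = 0) (h : e * m + m * e = m) :
    IsIdempotentElem (e + m) := by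
  rw [IsIdempotentElem, add_mul, mul_add, mul_add, he.eq, hm, add_zero, add_assoc, h]

theorem eq_zero_of_forall_mul_mul_mul_one_sub_eq_zero {P : Type*} [Ring P]
    (hprime : ∀ a b : P, (∀ x : P, a * x * b = 0) → a = 0 ∨ b = 0) {e a : P} (he1 : e ≠ 1)
    (hae : a * e = a) (h : ∀ y : P, a * (e * y * (1 - e)) = 0) : a = 0 :=
  (hprime a (1 - e) fun y => by simpa only [← mul_assoc, hae] using h y).resolve_right
    (sub_ne_zero.2 he1.symm)

theorem mul_self_eq_zero_of_mul_eq_self_of_mul_eq_zero {R : Type*} [NonUnitalSemiring R]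
    {e m : R} (hem : e * m = m) (hme : m * e = 0) : m * m = 0 := by
  nth_rw 2 [← hem]
  rw [← mul_assoc, hme, zero_mul]

theorem mul_self_eq_zero_of_mul_eq_zero_of_mul_eq_self {R : Type*} [NonUnitalSemiring R]
    {e t : R} (het : e * t = 0) (hte : t * e = t) : t * t = 0 := by
  nth_rw 1 [← hte]
  rw [mul_assoc, het, mul_zero]

namespace IsIdempotentElem

variable {P : Type*} [Ring P] {e : P}

theorem mul_mul_mul_one_sub (he : IsIdempotentElem e) (y : P) :
    e * (e * y * (1 - e)) = e * y * (1 - e) := by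
  rw [← mul_assoc, ← mul_assoc, he.eq]

theorem mul_mul_one_sub_mul (he : IsIdempotentElem e) (y : P) : e * y * (1 - e) * e = 0 := by
  rw [mul_assoc, he.one_sub_mul_self, mul_zero]

theorem mul_one_sub_mul_mul (he : IsIdempotentElem e) (x : P) : e * ((1 - e) * x * e) = 0 := by
  rw [← mul_assoc, ← mul_assoc, he.mul_one_sub_self, zero_mul, zero_mul]

theorem one_sub_mul_mul_mul (he : IsIdempotentElem e) (x : P) :
    (1 - e) * x * e * e = (1 - e) * x * e := by
  rw [mul_assoc, he.eq]

end IsIdempotentElem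

structure IsCommJordanLeftCentralizer {P : Type*} [Ring P] (D : P →+ P) : Prop where
  map_sq : ∀ p : P, D (p ^ 2) = D p * p
  map_mul_comm : ∀ p : P, D p * p = p * D p

namespace IsCommJordanLeftCentralizer

variable {P : Type*} [Ring P] {D : P →+ P}

theorem map_mul_self_of_isIdempotentElem (hD : IsCommJordanLeftCentralizer D) {q : P}
    (hq : IsIdempotentElem q) : D q * q = D q := by
  rw [← hD.map_sq, sq, hq.eq]

theorem mul_map_self_of_isIdempotentElem (hD : IsCommJordanLeftCentralizer D) {q : P}
    (hq : IsIdempotentElem q) : q * D q = D q := by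
  rw [← hD.map_mul_comm, hD.map_mul_self_of_isIdempotentElem hq]

theorem map_mul_self_of_mul_self_eq_zero (hD : IsCommJordanLeftCentralizer D) {s : P}
    (hs : s * s = 0) : D s * s = 0 := by
  rw [← hD.map_sq, sq, hs, map_zero]

theorem mul_map_self_of_mul_self_eq_zero (hD : IsCommJordanLeftCentralizer D) {s : P}
    (hs : s * s = 0) : s * D s = 0 := by
  rw [← hD.map_mul_comm, hD.map_mul_self_of_mul_self_eq_zero hs]

theorem map_mul_add_map_mul (hD : IsCommJordanLeftCentralizer D) (x y : P) :
    D x * y + D y * x = x * D y + y * D x := by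
  have h := hD.map_mul_comm (x + y)
  simp only [map_add, add_mul, mul_add, hD.map_mul_comm x, hD.map_mul_comm y] at h
  apply add_left_cancel (a := x * D x + y * D y)
  convert h using 1 <;> abel

variable {e : P}

theorem map_mul_add_map_mul_of_isIdempotentElem_add (hD : IsCommJordanLeftCentralizer D)
    {m : P} (he : IsIdempotentElem e) (hm : m * m = 0) (h : e * m + m * e = m) :
    D e * m + D m * e = D m := by
  have hq := hD.map_mul_self_of_isIdempotentElem (he.add_of_mul_self_eq_zero hm h)
  rw [map_add, add_mul, mul_add, mul_add, hD.map_mul_self_of_isIdempotentElem he,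
    hD.map_mul_self_of_mul_self_eq_zero hm, add_zero, add_assoc] at hq
  exact add_left_cancel hq

theorem mul_map_add_mul_map_of_isIdempotentElem_add (hD : IsCommJordanLeftCentralizer D)
    {m : P} (he : IsIdempotentElem e) (hm : m * m = 0) (h : e * m + m * e = m) :
    e * D m + m * D e = D m := by
  have hq := hD.mul_map_self_of_isIdempotentElem (he.add_of_mul_self_eq_zero hm h)
  rw [map_add, add_mul, mul_add, mul_add, hD.mul_map_self_of_isIdempotentElem he,
    hD.mul_map_self_of_mul_self_eq_zero hm, add_zero, add_assoc] at hq
  exact add_left_cancel hq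

theorem mul_map_of_mul_eq_self_of_mul_eq_zero (hD : IsCommJordanLeftCentralizer D) {m : P}
    (he : IsIdempotentElem e) (hem : e * m = m) (hme : m * e = 0) : e * D m = D m := by
  have h := hD.mul_map_add_mul_map_of_isIdempotentElem_add he
    (mul_self_eq_zero_of_mul_eq_self_of_mul_eq_zero hem hme) (by rw [hem, hme, add_zero])
  calc e * D m = e * (e * D m + m * D e) := by rw [h]
    _ = e * D m + m * D e := by rw [mul_add, ← mul_assoc, ← mul_assoc, he.eq, hem]
    _ = D m := h

theorem map_mul_of_mul_eq_self_of_mul_eq_zero (hD : IsCommJordanLeftCentralizer D) {m : P}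
    (he : IsIdempotentElem e) (hem : e * m = m) (hme : m * e = 0) :
    D e * m = D m * (1 - e) := by
  have h := hD.map_mul_add_map_mul_of_isIdempotentElem_add he
    (mul_self_eq_zero_of_mul_eq_self_of_mul_eq_zero hem hme) (by rw [hem, hme, add_zero])
  calc D e * m = (D e * m + D m * e) * (1 - e) := by
        rw [add_mul, mul_assoc, mul_assoc, he.mul_one_sub_self, mul_zero, add_zero, mul_sub,
          mul_one, hme, sub_zero]
    _ = D m * (1 - e) := by rw [h]

theorem map_mul_of_mul_eq_zero_of_mul_eq_self (hD : IsCommJordanLeftCentralizer D) {t : P}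
    (he : IsIdempotentElem e) (hDe : D e = 0) (het : e * t = 0) (hte : t * e = t) :
    D t * e = D t := by
  simpa only [hDe, zero_mul, zero_add] using hD.map_mul_add_map_mul_of_isIdempotentElem_add he
    (mul_self_eq_zero_of_mul_eq_zero_of_mul_eq_self het hte) (by rw [het, hte, zero_add])

theorem mul_map_of_mul_eq_zero_of_mul_eq_self (hD : IsCommJordanLeftCentralizer D) {t : P}
    (he : IsIdempotentElem e) (hDe : D e = 0) (het : e * t = 0) (hte : t * e = t) :
    e * D t = D t := by
  simpa only [hDe, mul_zero, add_zero] using hD.mul_map_add_mul_map_of_isIdempotentElem_add he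
    (mul_self_eq_zero_of_mul_eq_zero_of_mul_eq_self het hte) (by rw [het, hte, zero_add])

theorem map_eq_zero_of_isIdempotentElem (hD : IsCommJordanLeftCentralizer D)
    (hprime : ∀ a b : P, (∀ x : P, a * x * b = 0) → a = 0 ∨ b = 0)
    (he : IsIdempotentElem e) (he1 : e ≠ 1)
    (h12 : ∀ y : P, e * D (e * y * (1 - e)) * (1 - e) = 0) : D e = 0 := by
  refine eq_zero_of_forall_mul_mul_mul_one_sub_eq_zero hprime he1
    (hD.map_mul_self_of_isIdempotentElem he) fun y => ?_
  rw [hD.map_mul_of_mul_eq_self_of_mul_eq_zero he (he.mul_mul_mul_one_sub y)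
      (he.mul_mul_one_sub_mul y),
    ← hD.mul_map_of_mul_eq_self_of_mul_eq_zero he (he.mul_mul_mul_one_sub y)
      (he.mul_mul_one_sub_mul y)]
  exact h12 y

theorem map_one_sub_mul_mul_eq_zero (hD : IsCommJordanLeftCentralizer D)
    (hprime : ∀ a b : P, (∀ x : P, a * x * b = 0) → a = 0 ∨ b = 0)
    (he : IsIdempotentElem e) (he1 : e ≠ 1) (hDe : D e = 0)
    (h12 : ∀ y : P, e * D (e * y * (1 - e)) * (1 - e) = 0) (x : P) :
    D ((1 - e) * x * e) = 0 := by
  set t := (1 - e) * x * e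
  have het : e * t = 0 := he.mul_one_sub_mul_mul x
  have hte : t * e = t := he.one_sub_mul_mul_mul x
  have heDt := hD.mul_map_of_mul_eq_zero_of_mul_eq_self he hDe het hte
  refine eq_zero_of_forall_mul_mul_mul_one_sub_eq_zero hprime he1
    (hD.map_mul_of_mul_eq_zero_of_mul_eq_self he hDe het hte) fun y => ?_
  set m := e * y * (1 - e)
  have hDm : D m * (1 - e) = 0 := by
    rw [← hD.mul_map_of_mul_eq_self_of_mul_eq_zero he (he.mul_mul_mul_one_sub y)
      (he.mul_mul_one_sub_mul y)]
    exact h12 y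
  have hDmt : D m * t = 0 := by simp only [t, ← mul_assoc, hDm, zero_mul]
  have hmDt : m * D t = 0 := by rw [← heDt, ← mul_assoc, he.mul_mul_one_sub_mul, zero_mul]
  have h := hD.map_mul_add_map_mul t m
  rw [hDmt, hmDt, add_zero, add_zero] at h
  calc D t * m = e * D t * m := by rw [heDt]
    _ = e * t * D m := by rw [mul_assoc, h, ← mul_assoc]
    _ = 0 := by rw [het, zero_mul]

end IsCommJordanLeftCentralizer

theorem commuting_jordan_left_centralizer_twentyone_general {P : Type*} [Ring P]
    (hprime : ∀ a b : P, (∀ x : P, a * x * b = 0) → a = 0 ∨ b = 0)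
    (e₁ : P) (he : e₁ * e₁ = e₁) (he1 : e₁ ≠ 1)
    (D : P → P)
    (hadd : ∀ x y : P, D (x + y) = D x + D y)
    (hJ : ∀ p : P, D (p ^ 2) = D p * p)
    (hC : ∀ p : P, D p * p = p * D p)
    (h12 : ∀ m : P, (∃ x : P, m = e₁ * x * (1 - e₁)) → e₁ * D m * (1 - e₁) = 0) :
    ∀ t : P, (∃ x : P, t = (1 - e₁) * x * e₁) → D t = 0 := by
  rintro t ⟨x, rfl⟩
  have hD : IsCommJordanLeftCentralizer (AddMonoidHom.mk' D hadd) := ⟨hJ, hC⟩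
  have h12' (y : P) : e₁ * D (e₁ * y * (1 - e₁)) * (1 - e₁) = 0 := h12 _ ⟨y, rfl⟩
  exact hD.map_one_sub_mul_mul_eq_zero hprime he he1
    (hD.map_eq_zero_of_isIdempotentElem hprime he he1 h12') h12' x

/-- Lemma 3.3: D(t) = 0 for all t ∈ e₂Pe₁. -/
theorem commuting_jordan_left_centralizer_twentyone {P : Type*} [Ring P]
    (htf : ∀ p : P, 2 • p = 0 → p = 0)
    (hprime : ∀ a b : P, (∀ x : P, a * x * b = 0) → a = 0 ∨ b = 0)
    (e₁ : P) (he : e₁ * e₁ = e₁) (he0 : e₁ ≠ 0) (he1 : e₁ ≠ 1)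
    (D : P → P)
    (hadd : ∀ x y : P, D (x + y) = D x + D y)
    (hJ : ∀ p : P, D (p ^ 2) = D p * p)
    (hC : ∀ p : P, D p * p = p * D p)
    (h12 : ∀ m : P, (∃ x : P, m = e₁ * x * (1 - e₁)) → e₁ * D m * (1 - e₁) = 0) :
    ∀ t : P, (∃ x : P, t = (1 - e₁) * x * e₁) → D t = 0 :=
  commuting_jordan_left_centralizer_twentyone_general hprime e₁ he he1 D hadd hJ hC h12
end

section
/- Let P be a 2-torsion free prime unital ring with a nontrivial idempotent e₁, set e₂ = 1 − e₁, and let D : P → P be a commuting Jordan left centralizer such that e₁ D(m) e₂ = 0 for all m ∈ e₁Pe₂. Then D(b) = 0 for every b ∈ e₂Pe₂. -/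
/-- Lemma 3.4: D(b) = 0 for all b ∈ e₂Pe₂. -/
theorem commuting_jordan_left_centralizer_twentytwo {P : Type*} [Ring P]
    (htf : ∀ p : P, 2 • p = 0 → p = 0)
    (hprime : ∀ a b : P, (∀ x : P, a * x * b = 0) → a = 0 ∨ b = 0)
    (e₁ : P) (he : e₁ * e₁ = e₁) (he0 : e₁ ≠ 0) (he1 : e₁ ≠ 1)
    (D : P → P)
    (hadd : ∀ x y : P, D (x + y) = D x + D y)
    (hJ : ∀ p : P, D (p ^ 2) = D p * p)
    (hC : ∀ p : P, D p * p = p * D p)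
    (h12 : ∀ m : P, (∃ x : P, m = e₁ * x * (1 - e₁)) → e₁ * D m * (1 - e₁) = 0) :
    ∀ b : P, (∃ x : P, b = (1 - e₁) * x * (1 - e₁)) → D b = 0 := by
  set e₂ : P := 1 - e₁ with he₂def
  have hD0 : D 0 = 0 := by
    have h := hadd 0 0
    rw [add_zero] at h
    exact (left_eq_add.mp h)
  -- linearized Jordan identity
  have hJ' : ∀ u v : P, D (u * v + v * u) = D u * v + D v * u := by
    intro u v
    have h1 := hJ (u + v)
    rw [show (u + v) ^ 2 = u ^ 2 + (u * v + v * u) + v ^ 2 by noncomm_ring,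
      hadd, hadd, hJ, hJ, hadd] at h1
    -- h1 : D u * u + (D (u * v) + D (v * u)) + D v * v = D (u + v) * (u + v)
    have h2 : D (u * v) + D (v * u) = D (u + v) * (u + v) - D u * u - D v * v := by
      rw [← h1]; abel
    rw [hadd, h2, hadd u v]; noncomm_ring
  -- linearized commuting identity
  have hC' : ∀ u v : P, D u * v + D v * u = u * D v + v * D u := by
    intro u v
    have h := hC (u + v)
    rw [hadd] at h
    have key : D u * v + D v * u + (D u * u + D v * v)
        = u * D v + v * D u + (u * D u + v * D v) := by
      calc D u * v + D v * u + (D u * u + D v * v) = (D u + D v) * (u + v) := by noncomm_ring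
        _ = (u + v) * (D u + D v) := h
        _ = u * D v + v * D u + (u * D u + v * D v) := by noncomm_ring
    rw [hC u, hC v] at key
    exact add_right_cancel key
  -- idempotent facts
  have he2 : e₂ * e₂ = e₂ := by
    rw [he₂def, show (1 - e₁) * ((1:P) - e₁) = 1 - e₁ - e₁ + e₁ * e₁ from by noncomm_ring, he]
    abel
  have h12e : e₁ * e₂ = 0 := by rw [he₂def, mul_sub, mul_one, he, sub_self]
  have h21e : e₂ * e₁ = 0 := by rw [he₂def, sub_mul, one_mul, he, sub_self]
  -- facts about D e₁
  have hDe1a : D e₁ * e₁ = D e₁ := by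
    have h := hJ e₁; rw [sq, he] at h; exact h.symm
  have hDe1b : e₁ * D e₁ = D e₁ := by rw [← hC e₁]; exact hDe1a
  intro b hb
  obtain ⟨x, hb⟩ := hb
  have hbe1l : e₁ * b = 0 := by
    rw [hb, ← mul_assoc, ← mul_assoc, h12e, zero_mul, zero_mul]
  have hbe1r : b * e₁ = 0 := by rw [hb, mul_assoc, h21e, mul_zero]
  have hbe2l : e₂ * b = b := by rw [hb, ← mul_assoc, ← mul_assoc, he2]
  have hbe2r : b * e₂ = b := by rw [hb, mul_assoc, he2]
  -- D b * e₁ = 0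
  have hDe1b0 : D e₁ * b = 0 := by rw [← hDe1a, mul_assoc, hbe1l, mul_zero]
  have hbDe10 : b * D e₁ = 0 := by rw [← hDe1b, ← mul_assoc, hbe1r, zero_mul]
  have hDbe1 : D b * e₁ = 0 := by
    have h := hJ' e₁ b
    rw [hbe1l, hbe1r, add_zero, hD0, hDe1b0, zero_add] at h
    exact h.symm
  have he1Db : e₁ * D b = 0 := by
    have h := hC' e₁ b
    rw [hDe1b0, hDbe1, add_zero, hbDe10, add_zero] at h
    exact h.symm
  -- key: m * D b = 0 for every m ∈ e₁ P e₂
  have hm : ∀ y : P, (e₁ * y * e₂) * D b = 0 := by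
    intro y
    set m : P := e₁ * y * e₂ with hmdef
    have hme1l : e₁ * m = m := by rw [hmdef, ← mul_assoc, ← mul_assoc, he]
    have hme2r : m * e₂ = m := by rw [hmdef, mul_assoc, mul_assoc, he2, ← mul_assoc]
    have hme1r : m * e₁ = 0 := by rw [hmdef, mul_assoc, h21e, mul_zero]
    have hmDe10 : m * D e₁ = 0 := by rw [← hDe1b, ← mul_assoc, hme1r, zero_mul]
    have hA := hJ' e₁ m
    rw [hme1l, hme1r, add_zero] at hA
    -- hA : D m = D e₁ * m + D m * e₁
    have hB := hC' e₁ m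
    rw [hmDe10, add_zero] at hB
    -- hB : D e₁ * m + D m * e₁ = e₁ * D m
    have hDm1 : D m = e₁ * D m := hA.trans hB
    have h12m : e₁ * D m * e₂ = 0 := h12 m ⟨y, hmdef⟩
    have hDme2 : D m * e₂ = 0 := by rw [hDm1]; exact h12m
    have hDbm : D b * m = 0 := by
      rw [hmdef, ← mul_assoc, ← mul_assoc, hDbe1, zero_mul, zero_mul]
    have hDmb : D m * b = 0 := by rw [← hbe2l, ← mul_assoc, hDme2, zero_mul]
    have hbDm : b * D m = 0 := by rw [hDm1, ← mul_assoc, hbe1r, zero_mul]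
    have h := hC' b m
    rw [hDbm, hDmb, add_zero, hbDm, zero_add] at h
    exact h.symm
  have hfin : ∀ y : P, e₁ * y * (e₂ * D b) = 0 := by
    intro y
    rw [← mul_assoc]
    exact hm y
  rcases hprime e₁ (e₂ * D b) hfin with h | h
  · exact absurd h he0
  · have hsplit : D b = e₁ * D b + e₂ * D b := by rw [he₂def]; noncomm_ring
    rw [hsplit, he1Db, h, add_zero]
end

section
/- Let P be a 2-torsion free prime unital ring with a nontrivial idempotent e₁, set e₂ = 1 − e₁, and let D : P → P be a commuting generalized Jordan derivation, i.e., D is additive and there exists a commuting Jordan derivation d : P → P such that D(p²) = D(p)p + p d(p) and D(p)p = p D(p) for all p ∈ P. If moreover e₁ D(m) e₂ = 0 for all m ∈ e₁Pe₂, then D is the zero map. -/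
private lemma cancel_aux {P : Type*} [Ring P] {x e : P} (he : e * e = e)
    (h1 : x = x * e + e * x) (h2 : x * e = e * x) : x = 0 := by
  linear_combination (norm := noncomm_ring)
    (h1 - h2) - 2 * ((h1 - h2) * e) - 4 * (x * he)

/-- Corollary: a commuting generalized Jordan derivation D on a 2-torsion free prime
unital ring with a nontrivial idempotent, satisfying e₁ D(m) e₂ = 0 for all m ∈ e₁Pe₂,
is the zero map. -/
theorem commuting_generalized_jordan_derivation_eq_zero {P : Type*} [Ring P]
    (htf : ∀ p : P, 2 • p = 0 → p = 0)
    (hprime : ∀ a b : P, (∀ x : P, a * x * b = 0) → a = 0 ∨ b = 0)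
    (e₁ : P) (he : e₁ * e₁ = e₁) (he0 : e₁ ≠ 0) (he1 : e₁ ≠ 1)
    (D : P → P)
    (hDadd : ∀ x y : P, D (x + y) = D x + D y)
    (hgen : ∃ d : P → P,
      (∀ x y : P, d (x + y) = d x + d y) ∧
      (∀ p : P, d (p ^ 2) = d p * p + p * d p) ∧
      (∀ p : P, d p * p = p * d p) ∧
      (∀ p : P, D (p ^ 2) = D p * p + p * d p))
    (hDC : ∀ p : P, D p * p = p * D p)
    (h12 : ∀ m : P, (∃ x : P, m = e₁ * x * (1 - e₁)) → e₁ * D m * (1 - e₁) = 0) :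
    ∀ p : P, D p = 0 := by
  obtain ⟨d, hdadd, hdj, hdc, hDj⟩ := hgen
  have hdj' : ∀ p : P, d (p * p) = d p * p + p * d p := by
    intro p; have h := hdj p; rwa [pow_two] at h
  have hDj' : ∀ p : P, D (p * p) = D p * p + p * d p := by
    intro p; have h := hDj p; rwa [pow_two] at h
  set f := 1 - e₁ with hf
  have hef : e₁ * f = 0 := by rw [hf, mul_sub, mul_one, he, sub_self]
  have hfe : f * e₁ = 0 := by rw [hf, sub_mul, one_mul, he, sub_self]
  have hff : f * f = f := by rw [hf]; linear_combination (norm := noncomm_ring) he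
  have hfe1 : f + e₁ = 1 := by rw [hf]; noncomm_ring
  have hfne : f ≠ 0 := by
    intro h; rw [hf] at h; exact he1 (sub_eq_zero.mp h).symm
  -- additivity at 0
  have hD0 : D 0 = 0 := by
    have h := hDadd 0 0; rw [add_zero] at h; exact left_eq_add.mp h
  have hd0 : d 0 = 0 := by
    have h := hdadd 0 0; rw [add_zero] at h; exact left_eq_add.mp h
  -- linearized commuting conditions
  have hdcom : ∀ x y : P, d x * y + d y * x = x * d y + y * d x := by
    intro x y
    have h := hdc (x + y); rw [hdadd] at h
    linear_combination (norm := noncomm_ring) h - hdc x - hdc y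
  have hDcom : ∀ x y : P, D x * y + D y * x = x * D y + y * D x := by
    intro x y
    have h := hDC (x + y); rw [hDadd] at h
    linear_combination (norm := noncomm_ring) h - hDC x - hDC y
  -- d e₁ = 0
  have hde : d e₁ = 0 := by
    have h1 := hdj' e₁; rw [he] at h1
    exact cancel_aux he h1 (hdc e₁)
  have hdcome : ∀ y : P, d y * e₁ = e₁ * d y := by
    intro y
    linear_combination (norm := noncomm_ring) hdcom e₁ y - hde * y + y * hde
  -- D e₁ = 0
  have hA := hDj' e₁; rw [he] at hA
  have r1 : D e₁ = D e₁ * e₁ := by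
    linear_combination (norm := noncomm_ring) hA + e₁ * hde
  have s1 : e₁ * D e₁ = D e₁ := by
    linear_combination (norm := noncomm_ring) - r1 - hDC e₁
  have w2 : D e₁ * f = 0 := by
    linear_combination (norm := noncomm_ring) r1 * f + D e₁ * hef
  have hDe : D e₁ = 0 := by
    have key : ∀ x : P, D e₁ * x * f = 0 := by
      intro x
      have hm := h12 (e₁ * x * f) ⟨x, rfl⟩
      have hcom := hDcom e₁ (e₁ * x * f)
      linear_combination (norm := noncomm_ring)
        e₁ * hcom * f - s1 * (e₁ * x * (f * f)) + r1 * (x * (f * f))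
        - (D e₁ * x) * hff - (e₁ * D (e₁ * x * f)) * hef + he * (D (e₁ * x * f) * f)
        + hm + he * (x * (f * (D e₁ * f))) + (e₁ * x * f) * w2
    rcases hprime (D e₁) f key with h | h
    · exact h
    · exact absurd h hfne
  have hDcome : ∀ y : P, D y * e₁ = e₁ * D y := by
    intro y
    linear_combination (norm := noncomm_ring) hDcom e₁ y - hDe * y + y * hDe
  -- d 1 = 0, d f = 0, D f = D 1, D 1 central
  have hd1 : d 1 = 0 := by
    have h := hdj' 1
    rw [one_mul] at h
    linear_combination (norm := noncomm_ring) - h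
  have hdf : d f = 0 := by
    have h := hdadd f e₁; rw [hfe1] at h
    linear_combination (norm := noncomm_ring) - h + hd1 - hde
  have hDf : D f = D 1 := by
    have h := hDadd f e₁; rw [hfe1] at h
    linear_combination (norm := noncomm_ring) - h - hDe
  have hD1c : ∀ y : P, D 1 * y = y * D 1 := by
    intro y
    linear_combination (norm := noncomm_ring) hDcom 1 y
  -- linearized Jordan rules
  have hdlj : ∀ x y : P, d (x * y + y * x) = d x * y + d y * x + x * d y + y * d x := by
    intro x y
    have hsq : (x + y) * (x + y) = x * x + (x * y + y * x) + y * y := by noncomm_ring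
    have h := hdj' (x + y); rw [hsq] at h
    simp only [hdadd] at h
    rw [hdadd (x * y) (y * x)]
    linear_combination (norm := noncomm_ring) h - hdj' x - hdj' y
  have hDlj : ∀ x y : P, D (x * y + y * x) = D x * y + D y * x + x * d y + y * d x := by
    intro x y
    have hsq : (x + y) * (x + y) = x * x + (x * y + y * x) + y * y := by noncomm_ring
    have h := hDj' (x + y); rw [hsq] at h
    simp only [hDadd, hdadd] at h
    rw [hDadd (x * y) (y * x)]
    linear_combination (norm := noncomm_ring) h - hDj' x - hDj' y
  -- d vanishes on P₁₂
  have hdm : ∀ x : P, d (e₁ * x * f) = 0 := by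
    intro x
    have harg : e₁ * (e₁ * x * f) + e₁ * x * f * e₁ = e₁ * x * f := by
      linear_combination (norm := noncomm_ring) he * (x * f) + (e₁ * x) * hfe
    have h := hdlj e₁ (e₁ * x * f); rw [harg] at h
    have h1 : d (e₁ * x * f) = d (e₁ * x * f) * e₁ + e₁ * d (e₁ * x * f) := by
      linear_combination (norm := noncomm_ring) h + hde * (e₁ * x * f) + (e₁ * x * f) * hde
    exact cancel_aux he h1 (hdcome (e₁ * x * f))
  -- D vanishes on P₁₂, and D 1 kills P₁₂ from the left
  have hDm : ∀ x : P, D (e₁ * x * f) = 0 := by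
    intro x
    have harg : e₁ * (e₁ * x * f) + e₁ * x * f * e₁ = e₁ * x * f := by
      linear_combination (norm := noncomm_ring) he * (x * f) + (e₁ * x) * hfe
    have h := hDlj e₁ (e₁ * x * f); rw [harg] at h
    have j1 : D (e₁ * x * f) = D (e₁ * x * f) * e₁ := by
      linear_combination (norm := noncomm_ring)
        h + hDe * (e₁ * x * f) + e₁ * (hdm x) + (e₁ * x * f) * hde
    have k1 : D (e₁ * x * f) * f = 0 := by
      linear_combination (norm := noncomm_ring) j1 * f + D (e₁ * x * f) * hef
    have hargf : e₁ * x * f * f + f * (e₁ * x * f) = e₁ * x * f := by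
      linear_combination (norm := noncomm_ring) (e₁ * x) * hff + hfe * (x * f)
    have h3 := hDlj (e₁ * x * f) f; rw [hargf] at h3
    have k2 : D (e₁ * x * f) = D 1 * (e₁ * x * f) := by
      linear_combination (norm := noncomm_ring)
        h3 + k1 + hDf * (e₁ * x * f) + (e₁ * x * f) * hdf + f * (hdm x)
    linear_combination (norm := noncomm_ring)
      j1 + k2 * e₁ + (D 1 * (e₁ * x)) * hfe
  have hD1m : ∀ x : P, D 1 * e₁ * x * f = 0 := by
    intro x
    have harg : e₁ * (e₁ * x * f) + e₁ * x * f * e₁ = e₁ * x * f := by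
      linear_combination (norm := noncomm_ring) he * (x * f) + (e₁ * x) * hfe
    have h := hDlj e₁ (e₁ * x * f); rw [harg] at h
    have j1 : D (e₁ * x * f) = D (e₁ * x * f) * e₁ := by
      linear_combination (norm := noncomm_ring)
        h + hDe * (e₁ * x * f) + e₁ * (hdm x) + (e₁ * x * f) * hde
    have k1 : D (e₁ * x * f) * f = 0 := by
      linear_combination (norm := noncomm_ring) j1 * f + D (e₁ * x * f) * hef
    have hargf : e₁ * x * f * f + f * (e₁ * x * f) = e₁ * x * f := by
      linear_combination (norm := noncomm_ring) (e₁ * x) * hff + hfe * (x * f)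
    have h3 := hDlj (e₁ * x * f) f; rw [hargf] at h3
    have k2 : D (e₁ * x * f) = D 1 * (e₁ * x * f) := by
      linear_combination (norm := noncomm_ring)
        h3 + k1 + hDf * (e₁ * x * f) + (e₁ * x * f) * hdf + f * (hdm x)
    linear_combination (norm := noncomm_ring) hDm x - k2
  have hD1e : D 1 * e₁ = 0 := by
    rcases hprime (D 1 * e₁) f (fun x => hD1m x) with h | h
    · exact h
    · exact absurd h hfne
  have hD1 : D 1 = 0 := by
    have key : ∀ x : P, D 1 * x * e₁ = 0 := by
      intro x
      linear_combination (norm := noncomm_ring) (hD1c x) * e₁ + x * hD1e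
    rcases hprime (D 1) e₁ key with h | h
    · exact h
    · exact absurd h he0
  -- d and D vanish on P₂₁
  have hdn : ∀ x : P, d (f * x * e₁) = 0 := by
    intro x
    have harg : e₁ * (f * x * e₁) + f * x * e₁ * e₁ = f * x * e₁ := by
      linear_combination (norm := noncomm_ring) hef * (x * e₁) + (f * x) * he
    have h := hdlj e₁ (f * x * e₁); rw [harg] at h
    have h1 : d (f * x * e₁) = d (f * x * e₁) * e₁ + e₁ * d (f * x * e₁) := by
      linear_combination (norm := noncomm_ring) h + hde * (f * x * e₁) + (f * x * e₁) * hde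
    exact cancel_aux he h1 (hdcome (f * x * e₁))
  have hDn : ∀ x : P, D (f * x * e₁) = 0 := by
    intro x
    have harg : e₁ * (f * x * e₁) + f * x * e₁ * e₁ = f * x * e₁ := by
      linear_combination (norm := noncomm_ring) hef * (x * e₁) + (f * x) * he
    have h := hDlj e₁ (f * x * e₁); rw [harg] at h
    have j1n : D (f * x * e₁) = D (f * x * e₁) * e₁ := by
      linear_combination (norm := noncomm_ring)
        h + hDe * (f * x * e₁) + e₁ * (hdn x) + (f * x * e₁) * hde
    have w : f * D (f * x * e₁) = 0 := by
      linear_combination (norm := noncomm_ring)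
        f * j1n + f * (hDcome (f * x * e₁)) + hfe * (D (f * x * e₁))
    have key : ∀ z : P, D (f * x * e₁) * z * f = 0 := by
      intro z
      have hc := hDcom (f * x * e₁) (e₁ * z * f)
      linear_combination (norm := noncomm_ring)
        hc - (hDm z) * (f * x * e₁) + (f * x * e₁) * (hDm z)
        + (e₁ * z) * w + j1n * (z * f)
    rcases hprime (D (f * x * e₁)) f key with h | h
    · exact h
    · exact absurd h hfne
  -- D vanishes on P₁₁
  have hDa : ∀ x : P, D (e₁ * x * e₁) = 0 := by
    intro x
    have harg : e₁ * (e₁ * x * e₁) + e₁ * x * e₁ * e₁ = e₁ * x * e₁ + e₁ * x * e₁ := by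
      linear_combination (norm := noncomm_ring) he * (x * e₁) + (e₁ * x) * he
    have h := hdlj e₁ (e₁ * x * e₁); rw [harg, hdadd] at h
    have q1 : d (e₁ * x * e₁) = d (e₁ * x * e₁) * e₁ := by
      have h2 : d (e₁ * x * e₁) - d (e₁ * x * e₁) * e₁ = 0 := by
        apply htf
        rw [two_smul]
        linear_combination (norm := noncomm_ring)
          h + hde * (e₁ * x * e₁) + (e₁ * x * e₁) * hde - hdcome (e₁ * x * e₁)
      exact sub_eq_zero.mp h2
    have q2 : e₁ * d (e₁ * x * e₁) = d (e₁ * x * e₁) := by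
      linear_combination (norm := noncomm_ring) - q1 - hdcome (e₁ * x * e₁)
    have q3 : f * d (e₁ * x * e₁) = 0 := by
      linear_combination (norm := noncomm_ring) - (f * q2) + hfe * (d (e₁ * x * e₁))
    have hD := hDlj e₁ (e₁ * x * e₁); rw [harg, hDadd] at hD
    have q4 : D (e₁ * x * e₁) * f = 0 := by
      apply htf
      rw [two_smul]
      linear_combination (norm := noncomm_ring)
        hD * f + hDe * (e₁ * x * e₁ * f) + (D (e₁ * x * e₁)) * hef
        + e₁ * q1 * f + (e₁ * d (e₁ * x * e₁)) * hef + (e₁ * x * e₁) * hde * f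
    have q5 : D (e₁ * x * e₁) = D (e₁ * x * e₁) * e₁ := by
      linear_combination (norm := noncomm_ring) q4 - D (e₁ * x * e₁) * hfe1
    have key : ∀ z : P, D (e₁ * x * e₁) * z * f = 0 := by
      intro z
      have ham : e₁ * x * e₁ * (e₁ * z * f) + e₁ * z * f * (e₁ * x * e₁)
          = e₁ * (x * e₁ * z) * f := by
        linear_combination (norm := noncomm_ring)
          (e₁ * x) * he * (z * f) + (e₁ * z) * hfe * (x * e₁)
      have h7 := hDlj (e₁ * x * e₁) (e₁ * z * f); rw [ham, hDm (x * e₁ * z)] at h7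
      linear_combination (norm := noncomm_ring)
        - h7 - (hDm z) * (e₁ * x * e₁) - (e₁ * x * e₁) * (hdm z)
        - (e₁ * z) * q3 + q5 * (z * f)
    rcases hprime (D (e₁ * x * e₁)) f key with h | h
    · exact h
    · exact absurd h hfne
  -- D vanishes on P₂₂
  have hDb : ∀ x : P, D (f * x * f) = 0 := by
    intro x
    have harg : e₁ * (f * x * f) + f * x * f * e₁ = 0 := by
      linear_combination (norm := noncomm_ring) hef * (x * f) + (f * x) * hfe
    have h := hdlj e₁ (f * x * f); rw [harg, hd0] at h
    have r1b : d (f * x * f) * e₁ = 0 := by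
      apply htf
      rw [two_smul]
      linear_combination (norm := noncomm_ring)
        - h - hde * (f * x * f) - (f * x * f) * hde + hdcome (f * x * f)
    have r1b' : e₁ * d (f * x * f) = 0 := by
      linear_combination (norm := noncomm_ring) r1b - hdcome (f * x * f)
    have hD := hDlj e₁ (f * x * f); rw [harg, hD0] at hD
    have r2b : D (f * x * f) * e₁ = 0 := by
      linear_combination (norm := noncomm_ring)
        - hD - hDe * (f * x * f) - (f * x * f) * hde - r1b'
    have hfdb : f * d (f * x * f) = 0 := by
      have key : ∀ z : P, e₁ * z * (f * d (f * x * f)) = 0 := by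
        intro z
        have hbm : f * x * f * (e₁ * z * f) + e₁ * z * f * (f * x * f)
            = e₁ * (z * f * x) * f := by
          linear_combination (norm := noncomm_ring)
            (f * x) * hfe * (z * f) + (e₁ * z) * hff * (x * f)
        have h8 := hdlj (f * x * f) (e₁ * z * f); rw [hbm, hdm (z * f * x)] at h8
        linear_combination (norm := noncomm_ring)
          - h8 - (hdm z) * (f * x * f) - (f * x * f) * (hdm z) - r1b * (z * f)
      rcases hprime e₁ (f * d (f * x * f)) key with h' | h'
      · exact absurd h' he0
      · exact h'
    have hdb : d (f * x * f) = 0 := by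
      linear_combination (norm := noncomm_ring) - (hfe1 * d (f * x * f)) + hfdb + r1b'
    have w9 : D (f * x * f) = D (f * x * f) * f := by
      linear_combination (norm := noncomm_ring) - (D (f * x * f) * hfe1) + r2b
    have key : ∀ z : P, D (f * x * f) * z * e₁ = 0 := by
      intro z
      have hbn : f * x * f * (f * z * e₁) + f * z * e₁ * (f * x * f)
          = f * (x * f * z) * e₁ := by
        linear_combination (norm := noncomm_ring)
          (f * x) * hff * (z * e₁) + (f * z) * hef * (x * f)
      have h9 := hDlj (f * x * f) (f * z * e₁); rw [hbn, hDn (x * f * z)] at h9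
      linear_combination (norm := noncomm_ring)
        - h9 - (hDn z) * (f * x * f) - (f * x * f) * (hdn z)
        - (f * z * e₁) * hdb + w9 * (z * e₁)
    rcases hprime (D (f * x * f)) e₁ key with h' | h'
    · exact h'
    · exact absurd h' he0
  -- conclusion
  intro p
  have hp : p = e₁ * p * e₁ + (e₁ * p * f + (f * p * e₁ + f * p * f)) := by
    rw [hf]; noncomm_ring
  calc D p = D (e₁ * p * e₁ + (e₁ * p * f + (f * p * e₁ + f * p * f))) := by rw [← hp]
    _ = 0 := by
      rw [hDadd, hDadd, hDadd, hDa p, hDm p, hDn p, hDb p]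
      simp
end
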